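/- arXiv:math/0201011 — 10 statements merged into one kernel-verified Lean document; each statement's English description precedes it below -/
import Mathlib

section
/- Let m ≥ 1 be an integer, n ≥ m+2 an integer, and s a real number with s > m+1. Then the cone SMET^{m,s}_n contains only the zero vector. -/
/-- `V n` is the vertex set `{1, …, n}`. -/
def V (n : ℕ) : Finset ℕ := Finset.Icc 1 n

/-- `sigmaT d T = Σ_{k ∈ T} d (T \\ {k})`. -/
def sigmaT (d : Finset ℕ → ℝ) (T : Finset ℕ) : ℝ := ∑ k ∈ T, d (T.erase k)

/-- Membership in the cone `SMET m n s` of `(m,s)`-super-metrics: nonnegativity on every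
`(m+1)`-subset of `V n`, and the `(m,s)`-simplex inequalities for every `(m+2)`-subset `T`
of `V n` and every `i ∈ T`. -/
def inSMET (m n : ℕ) (s : ℝ) (d : Finset ℕ → ℝ) : Prop :=
  (∀ S ⊆ V n, S.card = m + 1 → 0 ≤ d S) ∧
  (∀ T ⊆ V n, T.card = m + 2 → ∀ i ∈ T, (s + 1) * d (T.erase i) ≤ sigmaT d T)

/-!
Extend `S` by a vertex `x` to an `(m+2)`-set `T`. Summing the `m+2` simplex inequalities of `T`
gives `(s+1) Σ_T(d) ≤ (m+2) Σ_T(d)`, so `Σ_T(d) ≤ 0` once `s > m+1`. Since `Σ_T(d)` is a sum of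
non-negative values, all of them vanish, `d S = d (T \ {x})` among them.
-/

section

variable {d : Finset ℕ → ℝ} {T : Finset ℕ}

lemma sigmaT_nonpos_of_simplex {s : ℝ} (hs : (T.card : ℝ) < s + 1)
    (hsimplex : ∀ i ∈ T, (s + 1) * d (T.erase i) ≤ sigmaT d T) : sigmaT d T ≤ 0 := by
  have hsum : (s + 1) * sigmaT d T ≤ T.card * sigmaT d T := by
    calc (s + 1) * sigmaT d T = ∑ i ∈ T, (s + 1) * d (T.erase i) := Finset.mul_sum _ _ _
      _ ≤ ∑ _i ∈ T, sigmaT d T := Finset.sum_le_sum hsimplex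
      _ = T.card * sigmaT d T := by rw [Finset.sum_const, nsmul_eq_mul]
  nlinarith

lemma erase_eq_zero_of_sigmaT_nonpos (hnonneg : ∀ k ∈ T, 0 ≤ d (T.erase k))
    (hsig : sigmaT d T ≤ 0) {i : ℕ} (hi : i ∈ T) : d (T.erase i) = 0 :=
  (Finset.sum_eq_zero_iff_of_nonneg hnonneg).mp
    (le_antisymm hsig (Finset.sum_nonneg hnonneg)) i hi

end

theorem smet_collapses_to_zero_general (m n : ℕ) (hn : m + 2 ≤ n)
    (s : ℝ) (hs : (m : ℝ) + 1 < s)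
    (d : Finset ℕ → ℝ) (hd : inSMET m n s d) :
    ∀ S ⊆ V n, S.card = m + 1 → d S = 0 := by
  obtain ⟨hnonneg, hsimplex⟩ := hd
  intro S hSV hScard
  obtain ⟨x, hxV, hxS⟩ : ∃ x ∈ V n, x ∉ S :=
    Finset.exists_mem_notMem_of_card_lt_card (by simp only [V, Nat.card_Icc]; omega)
  set T := insert x S
  have hTV : T ⊆ V n := Finset.insert_subset hxV hSV
  have hTcard : T.card = m + 2 := by rw [Finset.card_insert_of_notMem hxS, hScard]
  have hTnonneg : ∀ k ∈ T, 0 ≤ d (T.erase k) := fun k hk =>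
    hnonneg _ ((Finset.erase_subset k T).trans hTV)
      (by rw [Finset.card_erase_of_mem hk, hTcard]; rfl)
  have hsig : sigmaT d T ≤ 0 :=
    sigmaT_nonpos_of_simplex (by rw [hTcard]; push_cast; linarith) (hsimplex T hTV hTcard)
  simpa only [T, Finset.erase_insert hxS] using
    erase_eq_zero_of_sigmaT_nonpos hTnonneg hsig (Finset.mem_insert_self x S)

/-- For `s > m + 1` the cone of `(m,s)`-super-metrics contains only the zero vector. -/
theorem smet_collapses_to_zero (m n : ℕ) (hm : 1 ≤ m) (hn : m + 2 ≤ n)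
    (s : ℝ) (hs : (m : ℝ) + 1 < s)
    (d : Finset ℕ → ℝ) (hd : inSMET m n s d) :
    ∀ S ⊆ V n, S.card = m + 1 → d S = 0 :=
  smet_collapses_to_zero_general m n hn s hs d hd
end

section
/- Let m ≥ 1 and n ≥ m+2 be integers and let s = m+1. Then the cone SMET^{m,m+1}_n is exactly the set of nonnegative multiples of the all-ones vector, i.e. d ∈ SMET^{m,m+1}_n if and only if there exists λ ≥ 0 with d(S) = λ for every (m+1)-subset S of V_n. -/
open Finset

/-! With `s = m + 1`, the coefficient `s + 1 = m + 2` is the number of facets of an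
`(m+2)`-set `T`, so the simplex inequalities of `T` sum to `(m+2) Σ_T(d) ≤ (m+2) Σ_T(d)`:
every one of them is an equality, and all facets of `T` carry the same value. Two facets of a
common `T` are exactly two `(m+1)`-sets that differ by exchanging one element, and any two
`(m+1)`-subsets of `V n` are joined by a chain of such exchanges, so `d` is constant. -/

theorem eq_of_forall_card_mul_le_sum {ι K : Type*} [Field K] [LinearOrder K]
    [IsStrictOrderedRing K] {s : Finset ι} {f : ι → K}
    (h : ∀ i ∈ s, #s * f i ≤ ∑ k ∈ s, f k) {i j : ι} (hi : i ∈ s) (hj : j ∈ s) :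
    f i = f j := by
  have hsum : ∑ i ∈ s, (#s : K) * f i = ∑ _i ∈ s, ∑ k ∈ s, f k := by
    rw [← mul_sum, sum_const, nsmul_eq_mul]
  have heq := (sum_eq_sum_iff_of_le h).1 hsum
  have hs : (#s : K) ≠ 0 := by exact_mod_cast (card_pos.2 ⟨i, hi⟩).ne'
  exact mul_left_cancel₀ hs ((heq i hi).trans (heq j hj).symm)

theorem eq_of_forall_erase_eq {α β : Type*} [DecidableEq α] {U : Finset α} {r : ℕ}
    {d : Finset α → β}
    (h : ∀ T ⊆ U, #T = r + 1 → ∀ i ∈ T, ∀ j ∈ T, d (T.erase i) = d (T.erase j))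
    {S₁ S₂ : Finset α} (h₁ : S₁ ⊆ U) (h₂ : S₂ ⊆ U) (hc₁ : #S₁ = r) (hc₂ : #S₂ = r) :
    d S₁ = d S₂ := by
  induction hk : #(S₁ \ S₂) generalizing S₁ with
  | zero =>
    have hsub : S₁ ⊆ S₂ := sdiff_eq_empty_iff_subset.1 (card_eq_zero.1 hk)
    rw [eq_of_subset_of_card_le hsub (hc₂.trans hc₁.symm).le]
  | succ k ih =>
    obtain ⟨a, ha⟩ : (S₁ \ S₂).Nonempty := card_pos.1 (by omega)
    obtain ⟨b, hb⟩ : (S₂ \ S₁).Nonempty :=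
      card_pos.1 (by rw [card_sdiff_comm (hc₂.trans hc₁.symm)]; omega)
    rw [mem_sdiff] at hb
    have hT : insert b S₁ ⊆ U := insert_subset (h₂ hb.1) h₁
    have hTc : #(insert b S₁) = r + 1 := by rw [card_insert_of_notMem hb.2, hc₁]
    have hab : a ∈ insert b S₁ := mem_insert_of_mem (mem_sdiff.1 ha).1
    have hexchange : d S₁ = d ((insert b S₁).erase a) := by
      rw [← h _ hT hTc b (mem_insert_self b S₁) a hab, erase_insert hb.2]
    rw [hexchange]
    refine ih ((erase_subset a _).trans hT) (by rw [card_erase_of_mem hab, hTc]; rfl) ?_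
    rw [erase_sdiff_comm, insert_sdiff_of_mem _ hb.1, card_erase_of_mem ha, hk,
      Nat.add_sub_cancel]

theorem sigmaT_eq_of_forall_erase_eq {d : Finset ℕ → ℝ} {T : Finset ℕ} {c : ℝ}
    (h : ∀ k ∈ T, d (T.erase k) = c) : sigmaT d T = #T * c := by
  rw [sigmaT, sum_congr rfl h, sum_const, nsmul_eq_mul]

theorem inSMET.erase_eq {m n : ℕ} {d : Finset ℕ → ℝ} (hd : inSMET m n (m + 1) d)
    {T : Finset ℕ} (hT : T ⊆ V n) (hc : #T = m + 2) {i j : ℕ} (hi : i ∈ T) (hj : j ∈ T) :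
    d (T.erase i) = d (T.erase j) := by
  refine eq_of_forall_card_mul_le_sum (f := fun k => d (T.erase k)) (fun k hk => ?_) hi hj
  have hsimplex := hd.2 T hT hc k hk
  rw [sigmaT] at hsimplex
  rw [hc]
  push_cast
  linarith

theorem inSMET.eq_of_card_eq {m n : ℕ} {d : Finset ℕ → ℝ} (hd : inSMET m n (m + 1) d)
    {S₁ S₂ : Finset ℕ} (h₁ : S₁ ⊆ V n) (h₂ : S₂ ⊆ V n) (hc₁ : #S₁ = m + 1)
    (hc₂ : #S₂ = m + 1) : d S₁ = d S₂ :=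
  eq_of_forall_erase_eq (fun _T hT hc _i hi _j hj => hd.erase_eq hT hc hi hj) h₁ h₂ hc₁ hc₂

theorem inSMET_of_forall_eq {m n : ℕ} {d : Finset ℕ → ℝ} {lam : ℝ} (hlam : 0 ≤ lam)
    (hd : ∀ S ⊆ V n, #S = m + 1 → d S = lam) : inSMET m n (m + 1) d := by
  refine ⟨fun S hS hc => hd S hS hc ▸ hlam, fun T hT hc i hi => ?_⟩
  have herase : ∀ k ∈ T, d (T.erase k) = lam := fun k hk =>
    hd _ ((erase_subset k T).trans hT) (by rw [card_erase_of_mem hk, hc]; rfl)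
  rw [herase i hi, sigmaT_eq_of_forall_erase_eq herase, hc]
  push_cast
  exact le_of_eq (by ring)

theorem smet_collapses_to_allones_general (m n : ℕ)
    (d : Finset ℕ → ℝ) :
    inSMET m n ((m : ℝ) + 1) d ↔
      ∃ lam : ℝ, 0 ≤ lam ∧ ∀ S ⊆ V n, S.card = m + 1 → d S = lam := by
  constructor
  · intro hd
    by_cases h : ∃ S₀ ⊆ V n, #S₀ = m + 1
    · obtain ⟨S₀, hS₀, hc₀⟩ := h
      exact ⟨d S₀, hd.1 S₀ hS₀ hc₀, fun S hS hc => hd.eq_of_card_eq hS hS₀ hc hc₀⟩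
    · push Not at h
      exact ⟨0, le_rfl, fun S hS hc => absurd hc (h S hS)⟩
  · rintro ⟨lam, hlam, hd⟩
    exact inSMET_of_forall_eq hlam hd

/-- For `s = m + 1` the cone of `(m,s)`-super-metrics is exactly the set of nonnegative
multiples of the all-ones vector. -/
theorem smet_collapses_to_allones (m n : ℕ) (hm : 1 ≤ m) (hn : m + 2 ≤ n)
    (d : Finset ℕ → ℝ) :
    inSMET m n ((m : ℝ) + 1) d ↔
      ∃ lam : ℝ, 0 ≤ lam ∧ ∀ S ⊆ V n, S.card = m + 1 → d S = lam :=
  smet_collapses_to_allones_general m n d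
end

section
/- Let m ≥ 1 and n ≥ m+2 be integers and let s be a real number with m ≤ s < m+1. If a real-valued function d on the (m+1)-element subsets of V_n satisfies all (m,s)-simplex inequalities, then d automatically satisfies all non-negativity inequalities, i.e. d(S) ≥ 0 for every (m+1)-subset S of V_n. -/
namespace Finset

variable {ι : Type*} {T : Finset ι} {s : ℝ} {x : ι → ℝ}

theorem sum_nonneg_of_mul_le_sum (hs : s + 1 < #T)
    (hx : ∀ i ∈ T, (s + 1) * x i ≤ ∑ k ∈ T, x k) : 0 ≤ ∑ k ∈ T, x k := by
  have hsum : ∑ i ∈ T, (s + 1) * x i ≤ ∑ _i ∈ T, ∑ k ∈ T, x k := sum_le_sum hx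
  rw [← mul_sum, sum_const, nsmul_eq_mul] at hsum
  nlinarith

variable [DecidableEq ι]

theorem mul_sum_erase_le_of_mul_le_sum (hx : ∀ i ∈ T, (s + 1) * x i ≤ ∑ k ∈ T, x k)
    {j : ι} (hj : j ∈ T) :
    (s + 1) * (∑ k ∈ T, x k - x j) ≤ (#T - 1 : ℕ) * ∑ k ∈ T, x k := by
  have hsum : ∑ i ∈ T.erase j, (s + 1) * x i ≤ ∑ _i ∈ T.erase j, ∑ k ∈ T, x k :=
    sum_le_sum fun i hi => hx i (mem_of_mem_erase hi)
  rwa [← mul_sum, sum_erase_eq_sub hj, sum_const, card_erase_of_mem hj, nsmul_eq_mul] at hsum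

theorem nonneg_of_mul_le_sum {m : ℕ} (hT : #T = m + 2) (hs1 : (m : ℝ) ≤ s)
    (hs2 : s < (m : ℝ) + 1) (hx : ∀ i ∈ T, (s + 1) * x i ≤ ∑ k ∈ T, x k) :
    ∀ j ∈ T, 0 ≤ x j := by
  intro j hj
  have hσ : 0 ≤ ∑ k ∈ T, x k := sum_nonneg_of_mul_le_sum (by rw [hT]; push_cast; linarith) hx
  have hrest := mul_sum_erase_le_of_mul_le_sum hx hj
  rw [hT, show m + 2 - 1 = m + 1 from rfl] at hrest
  push_cast at hrest
  have hscaled : 0 ≤ (s + 1) * x j := by nlinarith [mul_nonneg (sub_nonneg.mpr hs1) hσ]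
  exact (mul_nonneg_iff_of_pos_left (by linarith [m.cast_nonneg (α := ℝ)])).mp hscaled

end Finset

open Finset

theorem simplex_implies_nonneg_general (m n : ℕ) (hn : m + 2 ≤ n)
    (s : ℝ) (hs1 : (m : ℝ) ≤ s) (hs2 : s < (m : ℝ) + 1)
    (d : Finset ℕ → ℝ)
    (hd : ∀ T ⊆ V n, T.card = m + 2 → ∀ i ∈ T, (s + 1) * d (T.erase i) ≤ sigmaT d T) :
    ∀ S ⊆ V n, S.card = m + 1 → 0 ≤ d S := by
  intro S hS hScard
  obtain ⟨j, hjV, hjS⟩ := exists_mem_notMem_of_card_lt_card (s := S) (t := V n)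
    (by simp only [V, Nat.card_Icc]; omega)
  have hT : #(insert j S) = m + 2 := by rw [card_insert_of_notMem hjS, hScard]
  have hfacet := nonneg_of_mul_le_sum hT hs1 hs2 (hd _ (insert_subset hjV hS) hT) j
    (mem_insert_self j S)
  rwa [erase_insert hjS] at hfacet

/-- For `m ≤ s < m + 1`, the non-negativity inequalities are implied by the
`(m,s)`-simplex inequalities. -/
theorem simplex_implies_nonneg (m n : ℕ) (hm : 1 ≤ m) (hn : m + 2 ≤ n)
    (s : ℝ) (hs1 : (m : ℝ) ≤ s) (hs2 : s < (m : ℝ) + 1)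
    (d : Finset ℕ → ℝ)
    (hd : ∀ T ⊆ V n, T.card = m + 2 → ∀ i ∈ T, (s + 1) * d (T.erase i) ≤ sigmaT d T) :
    ∀ S ⊆ V n, S.card = m + 1 → 0 ≤ d S :=
  simplex_implies_nonneg_general m n hn s hs1 hs2 d hd
end

section
/- Let m ≥ 2 and n ≥ m+3 be integers and let s be a real number with m−1 < s < m. Let A and B be (m+1)-element subsets of V_n with |A∩B| = m. If d ∈ SMET^{m,s}_n satisfies d(A) = 0 and d(B) = 0, then d((A∪B)∖{k}) = 0 for every k ∈ A∪B. (This is the content of the fact that for m−1 < s < m the non-negativity facets NN_A and NN_B with |A∩B| = m are non-adjacent in SMET^{m,s}_n.) -/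
namespace Finset

variable {α : Type*} [DecidableEq α] {A B : Finset α}

theorem card_union_of_card_inter {m : ℕ} (hA : A.card = m + 1) (hB : B.card = m + 1)
    (hAB : (A ∩ B).card = m) : (A ∪ B).card = m + 2 := by
  have := card_union_add_card_inter A B
  omega

theorem union_erase_eq_right {k : α} (hk : k ∈ A ∪ B) (hkB : k ∉ B)
    (hcard : (A ∪ B).card = B.card + 1) : (A ∪ B).erase k = B := by
  refine (eq_of_subset_of_card_le (fun x hx => ?_) ?_).symm
  · exact mem_erase.mpr ⟨fun h => hkB (h ▸ hx), mem_union_right _ hx⟩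
  · rw [card_erase_of_mem hk, hcard, Nat.add_sub_cancel]

end Finset

theorem inSMET.erase_nonneg {m n : ℕ} {s : ℝ} {d : Finset ℕ → ℝ} (hd : inSMET m n s d)
    {T : Finset ℕ} (hT : T ⊆ V n) (hTcard : T.card = m + 2) {k : ℕ} (hk : k ∈ T) :
    0 ≤ d (T.erase k) :=
  hd.1 _ ((Finset.erase_subset _ _).trans hT) (by rw [Finset.card_erase_of_mem hk, hTcard]; rfl)

section Faces

variable {d : Finset ℕ → ℝ} {T C : Finset ℕ}

theorem sigmaT_eq_sum_of_vanish (hC : C ⊆ T) (hvan : ∀ k ∈ T, k ∉ C → d (T.erase k) = 0) :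
    sigmaT d T = ∑ k ∈ C, d (T.erase k) :=
  (Finset.sum_subset hC hvan).symm

theorem erase_eq_zero_of_simplex_of_vanish {s : ℝ} (hnn : ∀ k ∈ T, 0 ≤ d (T.erase k))
    (hsimplex : ∀ i ∈ C, (s + 1) * d (T.erase i) ≤ sigmaT d T) (hC : C ⊆ T)
    (hvan : ∀ k ∈ T, k ∉ C → d (T.erase k) = 0) (hs : (C.card : ℝ) < s + 1) :
    ∀ k ∈ T, d (T.erase k) = 0 := by
  have hσ_nonneg : 0 ≤ sigmaT d T := Finset.sum_nonneg hnn
  have hσ_le : (s + 1) * sigmaT d T ≤ C.card * sigmaT d T :=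
    calc (s + 1) * sigmaT d T = ∑ i ∈ C, (s + 1) * d (T.erase i) := by
          rw [sigmaT_eq_sum_of_vanish hC hvan, Finset.mul_sum]
      _ ≤ ∑ _i ∈ C, sigmaT d T := Finset.sum_le_sum hsimplex
      _ = C.card * sigmaT d T := by rw [Finset.sum_const, nsmul_eq_mul]
  have hσ : sigmaT d T = 0 := by nlinarith
  exact (Finset.sum_eq_zero_iff_of_nonneg hnn).mp hσ

end Faces

theorem nn_nn_nonadjacent_general (m n : ℕ)
    (s : ℝ) (hs1 : (m : ℝ) - 1 < s)
    (A B : Finset ℕ) (hA : A ⊆ V n) (hB : B ⊆ V n)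
    (hAcard : A.card = m + 1) (hBcard : B.card = m + 1) (hAB : (A ∩ B).card = m)
    (d : Finset ℕ → ℝ) (hd : inSMET m n s d) (hdA : d A = 0) (hdB : d B = 0) :
    ∀ k ∈ A ∪ B, d ((A ∪ B).erase k) = 0 := by
  have hT : A ∪ B ⊆ V n := Finset.union_subset hA hB
  have hTcard := Finset.card_union_of_card_inter hAcard hBcard hAB
  have hvan : ∀ k ∈ A ∪ B, k ∉ A ∩ B → d ((A ∪ B).erase k) = 0 := by
    intro k hk hkAB
    by_cases hkB : k ∈ B
    · have hkA : k ∉ A := fun hkA => hkAB (Finset.mem_inter.mpr ⟨hkA, hkB⟩)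
      rw [Finset.union_comm] at hk hTcard ⊢
      rw [Finset.union_erase_eq_right hk hkA (by omega), hdA]
    · rw [Finset.union_erase_eq_right hk hkB (by omega), hdB]
  refine erase_eq_zero_of_simplex_of_vanish (fun k hk => hd.erase_nonneg hT hTcard hk)
    (fun i hi => hd.2 _ hT hTcard i (Finset.inter_subset_union hi)) Finset.inter_subset_union
    hvan ?_
  rw [hAB]
  linarith

/-- For `m - 1 < s < m`, if `d` in the cone of `(m,s)`-super-metrics vanishes on two
`(m+1)`-subsets `A` and `B` with `|A ∩ B| = m`, then `d` vanishes on all `(m+1)`-subsets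
of `A ∪ B`. -/
theorem nn_nn_nonadjacent (m n : ℕ) (hm : 2 ≤ m) (hn : m + 3 ≤ n)
    (s : ℝ) (hs1 : (m : ℝ) - 1 < s) (hs2 : s < (m : ℝ))
    (A B : Finset ℕ) (hA : A ⊆ V n) (hB : B ⊆ V n)
    (hAcard : A.card = m + 1) (hBcard : B.card = m + 1) (hAB : (A ∩ B).card = m)
    (d : Finset ℕ → ℝ) (hd : inSMET m n s d) (hdA : d A = 0) (hdB : d B = 0) :
    ∀ k ∈ A ∪ B, d ((A ∪ B).erase k) = 0 :=
  nn_nn_nonadjacent_general m n s hs1 A B hA hB hAcard hBcard hAB d hd hdA hdB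
end

section
/- Let m ≥ 2 and n ≥ m+3 be integers and let s = m−1. Let A and B be (m+1)-element subsets of V_n with |A∩B| = m. If d ∈ SMET^{m,m−1}_n satisfies d(A) = 0 and d(B) = 0, then m·d((A∪B)∖{k}) = Σ_{A∪B}(d) for every k ∈ A∩B; in particular all the values d((A∪B)∖{k}) with k ∈ A∩B are equal. -/
/-!
Put `T = A ∪ B`, an `(m+2)`-set with `T \ {a} = A` and `T \ {b} = B` for the two points `a`, `b`
outside `A ∩ B`. Since `d` vanishes there, `Σ_T(d)` is the sum of the `m` values
`d(T \ {k})`, `k ∈ A ∩ B`, each of which satisfies `m · d(T \ {k}) ≤ Σ_T(d)` by the simplex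
inequality. The sum of these `m` inequalities over `k ∈ A ∩ B` reads `m · Σ_T(d) ≤ m · Σ_T(d)`,
so each of them is an equality.
-/

open Finset

namespace Finset

variable {α : Type*} [DecidableEq α]

theorem union_erase_eq_left_of_mem_sdiff {A B : Finset α} {k : α} (hk : k ∈ B \ A)
    (hB : B.card = (A ∩ B).card + 1) : (A ∪ B).erase k = A := by
  obtain ⟨hkB, hkA⟩ := mem_sdiff.1 hk
  refine (eq_of_subset_of_card_le (subset_erase.2 ⟨subset_union_left, hkA⟩) ?_).symm
  rw [card_erase_of_mem (mem_union_right _ hkB)]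
  have := card_union_add_card_inter A B
  omega

end Finset

theorem sigmaT_union_eq_sum_inter {A B : Finset ℕ} (hA : A.card = (A ∩ B).card + 1)
    (hB : B.card = (A ∩ B).card + 1) {d : Finset ℕ → ℝ} (hdA : d A = 0) (hdB : d B = 0) :
    sigmaT d (A ∪ B) = ∑ k ∈ A ∩ B, d ((A ∪ B).erase k) := by
  rw [sigmaT, ← sum_sdiff (inter_subset_union : A ∩ B ⊆ A ∪ B), add_eq_right]
  refine sum_eq_zero fun k hk => ?_
  obtain ⟨hkAB, hkI⟩ := mem_sdiff.1 hk
  by_cases hkA : k ∈ A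
  · have hkA' : k ∈ A \ B := mem_sdiff.2 ⟨hkA, fun hkB => hkI (mem_inter.2 ⟨hkA, hkB⟩)⟩
    rw [union_comm, union_erase_eq_left_of_mem_sdiff hkA' (by rwa [inter_comm]), hdB]
  · have hkB : k ∈ B \ A := mem_sdiff.2 ⟨(mem_union.1 hkAB).resolve_left hkA, hkA⟩
    rw [union_erase_eq_left_of_mem_sdiff hkB hB, hdA]

theorem nn_nn_boundary_case_general (m n : ℕ)
    (A B : Finset ℕ) (hA : A ⊆ V n) (hB : B ⊆ V n)
    (hAcard : A.card = m + 1) (hBcard : B.card = m + 1) (hAB : (A ∩ B).card = m)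
    (d : Finset ℕ → ℝ) (hd : inSMET m n ((m : ℝ) - 1) d)
    (hdA : d A = 0) (hdB : d B = 0) :
    (∀ k ∈ A ∩ B, (m : ℝ) * d ((A ∪ B).erase k) = sigmaT d (A ∪ B)) ∧
    (∀ k ∈ A ∩ B, ∀ l ∈ A ∩ B, d ((A ∪ B).erase k) = d ((A ∪ B).erase l)) := by
  have hTcard : (A ∪ B).card = m + 2 := by
    have := card_union_add_card_inter A B
    omega
  have hsimplex : ∀ k ∈ A ∩ B, (m : ℝ) * d ((A ∪ B).erase k) ≤ sigmaT d (A ∪ B) :=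
    fun k hk => by
      simpa using hd.2 _ (union_subset hA hB) hTcard k (inter_subset_union hk)
  have hsum : ∑ k ∈ A ∩ B, (m : ℝ) * d ((A ∪ B).erase k) = ∑ _k ∈ A ∩ B, sigmaT d (A ∪ B) := by
    rw [← mul_sum, ← sigmaT_union_eq_sum_inter (by omega) (by omega) hdA hdB, sum_const, hAB,
      nsmul_eq_mul]
  have hmain := (sum_eq_sum_iff_of_le hsimplex).1 hsum
  refine ⟨hmain, fun k hk l hl => ?_⟩
  have hm : (m : ℝ) ≠ 0 := by
    have := card_pos.2 ⟨k, hk⟩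
    rw [hAB] at this
    positivity
  exact mul_left_cancel₀ hm ((hmain k hk).trans (hmain l hl).symm)

/-- For `s = m - 1`, if `d` in the cone of `(m,s)`-super-metrics vanishes on two
`(m+1)`-subsets `A` and `B` with `|A ∩ B| = m`, then `m * d ((A ∪ B).erase k)` equals
`sigmaT d (A ∪ B)` for every `k ∈ A ∩ B`; in particular all these values are equal. -/
theorem nn_nn_boundary_case (m n : ℕ) (hm : 2 ≤ m) (hn : m + 3 ≤ n)
    (A B : Finset ℕ) (hA : A ⊆ V n) (hB : B ⊆ V n)
    (hAcard : A.card = m + 1) (hBcard : B.card = m + 1) (hAB : (A ∩ B).card = m)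
    (d : Finset ℕ → ℝ) (hd : inSMET m n ((m : ℝ) - 1) d)
    (hdA : d A = 0) (hdB : d B = 0) :
    (∀ k ∈ A ∩ B, (m : ℝ) * d ((A ∪ B).erase k) = sigmaT d (A ∪ B)) ∧
    (∀ k ∈ A ∩ B, ∀ l ∈ A ∩ B, d ((A ∪ B).erase k) = d ((A ∪ B).erase l)) :=
  nn_nn_boundary_case_general m n A B hA hB hAcard hBcard hAB d hd hdA hdB
end

section
/- Let m ≥ 1 and n ≥ m+2 be integers and s > 0 a real number. If d lies on an extreme ray of SMET^{m,s}_n, then its zero-extension d^{ze} lies on an extreme ray of SMET^{m+1,s}_{n+1}. -/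
/-- `d` lies on an extreme ray of the cone `C` (whose members are functions on the finsets
satisfying the predicate `idx`): `d ∈ C`, `d` is nonzero on the relevant index set, and
whenever `d = x + y` with `x, y ∈ C`, both `x` and `y` are nonnegative multiples of `d`
on the relevant index set. -/
def IsExtremeRayOn (C : (Finset ℕ → ℝ) → Prop) (idx : Finset ℕ → Prop)
    (d : Finset ℕ → ℝ) : Prop :=
  C d ∧ (∃ S, idx S ∧ d S ≠ 0) ∧
  ∀ x y : Finset ℕ → ℝ, C x → C y → (∀ S, idx S → d S = x S + y S) →
    ((∃ c : ℝ, 0 ≤ c ∧ ∀ S, idx S → x S = c * d S) ∧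
     (∃ c : ℝ, 0 ≤ c ∧ ∀ S, idx S → y S = c * d S))

/-- The zero-extension of a function `d` on `(m+1)`-subsets of `V n`: a function on
`(m+2)`-subsets `S` of `V (n+1)`, equal to `0` if `S ⊆ V n` and to `d (S.erase (n+1))`
otherwise. -/
def zeroExtension (n : ℕ) (d : Finset ℕ → ℝ) (S : Finset ℕ) : ℝ :=
  if S ⊆ V n then 0 else d (S.erase (n + 1))

/-!
An `(m+2)`-subset of `V (n+1)` either lies in `V n`, where `d^{ze}` vanishes, or is
`insert (n+1) S` for an `(m+1)`-subset `S` of `V n`, where `d^{ze}` equals `d S`; so `d^{ze}`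
is `0` off the link of the vertex `n+1` and `d` on it. If `d^{ze} = x + y` inside the cone,
nonnegativity forces `x` and `y` to vanish on `V n`, and then the simplex inequalities of `x`
at the sets `insert (n+1) T` are exactly the `(m,s)`-simplex inequalities of its link. Hence the
links of `x` and `y` decompose `d` inside `SMET m n s`, extremality of `d` makes them multiples
of `d`, and so `x` and `y` are the same multiples of `d^{ze}`.
-/

open Finset

def link (a : ℕ) (x : Finset ℕ → ℝ) (S : Finset ℕ) : ℝ := x (insert a S)

lemma V_succ (n : ℕ) : V (n + 1) = insert (n + 1) (V n) :=
  (insert_Icc_right_eq_Icc_add_one (by omega)).symm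

lemma succ_notMem_of_subset_V {n : ℕ} {S : Finset ℕ} (hS : S ⊆ V n) : n + 1 ∉ S :=
  fun h => by simpa [V] using hS h

lemma succ_ne_of_mem_subset_V {n i : ℕ} {S : Finset ℕ} (hS : S ⊆ V n) (hi : i ∈ S) :
    n + 1 ≠ i :=
  fun h => succ_notMem_of_subset_V hS (h ▸ hi)

lemma V_subset_V_succ (n : ℕ) : V n ⊆ V (n + 1) := by
  rw [V_succ]
  exact subset_insert _ _

lemma insert_succ_subset_V_succ {n : ℕ} {S : Finset ℕ} (hS : S ⊆ V n) :
    insert (n + 1) S ⊆ V (n + 1) := by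
  rw [V_succ]
  exact insert_subset_insert _ hS

lemma card_insert_succ {n k : ℕ} {S : Finset ℕ} (hS : S ⊆ V n) (hc : S.card = k) :
    (insert (n + 1) S).card = k + 1 := by
  rw [card_insert_of_notMem (succ_notMem_of_subset_V hS), hc]

lemma subset_V_succ_cases {n k : ℕ} {S : Finset ℕ} (hS : S ⊆ V (n + 1)) (hc : S.card = k + 1) :
    S ⊆ V n ∨ ∃ S' ⊆ V n, S'.card = k ∧ S = insert (n + 1) S' := by
  rw [V_succ] at hS
  by_cases h : n + 1 ∈ S
  · refine .inr ⟨S.erase (n + 1), subset_insert_iff.mp hS, ?_, (insert_erase h).symm⟩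
    rw [card_erase_of_mem h, hc, Nat.add_sub_cancel]
  · exact .inl ((subset_insert_iff_of_notMem h).mp hS)

lemma sigmaT_insert {a : ℕ} {T : Finset ℕ} (ha : a ∉ T) (x : Finset ℕ → ℝ) :
    sigmaT x (insert a T) = x T + sigmaT (link a x) T := by
  rw [sigmaT, sum_insert ha, erase_insert ha, sigmaT]
  congr 1
  refine sum_congr rfl fun k hk => ?_
  rw [link, erase_insert_of_ne (by rintro rfl; exact ha hk)]

lemma sigmaT_nonneg {m n : ℕ} {s : ℝ} {x : Finset ℕ → ℝ} (hx : inSMET m n s x)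
    {T : Finset ℕ} (hT : T ⊆ V n) (hc : T.card = m + 2) : 0 ≤ sigmaT x T :=
  sum_nonneg fun k hk =>
    hx.1 _ ((erase_subset k T).trans hT) (by rw [card_erase_of_mem hk, hc]; rfl)

lemma zeroExtension_of_subset {n : ℕ} (d : Finset ℕ → ℝ) {S : Finset ℕ} (hS : S ⊆ V n) :
    zeroExtension n d S = 0 := if_pos hS

lemma zeroExtension_insert {n : ℕ} (d : Finset ℕ → ℝ) {S : Finset ℕ} (hS : S ⊆ V n) :
    zeroExtension n d (insert (n + 1) S) = d S := by
  have hnot : ¬ insert (n + 1) S ⊆ V n := fun h => succ_notMem_of_subset_V h (mem_insert_self _ _)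
  rw [zeroExtension, if_neg hnot, erase_insert (succ_notMem_of_subset_V hS)]

lemma sigmaT_zeroExtension_insert {n : ℕ} (d : Finset ℕ → ℝ) {T : Finset ℕ} (hT : T ⊆ V n) :
    sigmaT (zeroExtension n d) (insert (n + 1) T) = sigmaT d T := by
  rw [sigmaT_insert (succ_notMem_of_subset_V hT), zeroExtension_of_subset d hT, zero_add]
  exact sum_congr rfl fun k _ => zeroExtension_insert d ((erase_subset k T).trans hT)

lemma inSMET_zeroExtension {m n : ℕ} {s : ℝ} {d : Finset ℕ → ℝ} (hd : inSMET m n s d) :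
    inSMET (m + 1) (n + 1) s (zeroExtension n d) := by
  constructor
  · intro S hS hc
    obtain hSn | ⟨S, hSn, hcS, rfl⟩ := subset_V_succ_cases hS hc
    · exact (zeroExtension_of_subset d hSn).ge
    · rw [zeroExtension_insert d hSn]
      exact hd.1 S hSn hcS
  · intro T hT hc i hi
    obtain hTn | ⟨T, hTn, hcT, rfl⟩ := subset_V_succ_cases hT hc
    · rw [zeroExtension_of_subset d ((erase_subset i T).trans hTn), mul_zero, sigmaT]
      exact (sum_eq_zero fun k _ => zeroExtension_of_subset d ((erase_subset k T).trans hTn)).ge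
    rw [sigmaT_zeroExtension_insert d hTn]
    obtain rfl | hi := mem_insert.mp hi
    · rw [erase_insert (succ_notMem_of_subset_V hTn), zeroExtension_of_subset d hTn, mul_zero]
      exact sigmaT_nonneg hd hTn hcT
    · rw [erase_insert_of_ne (succ_ne_of_mem_subset_V hTn hi),
        zeroExtension_insert d ((erase_subset i T).trans hTn)]
      exact hd.2 T hTn hcT i hi

lemma inSMET_link {m n : ℕ} {s : ℝ} {x : Finset ℕ → ℝ} (hx : inSMET (m + 1) (n + 1) s x)
    (hx0 : ∀ S ⊆ V n, S.card = m + 2 → x S = 0) : inSMET m n s (link (n + 1) x) := by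
  constructor
  · intro S hS hc
    exact hx.1 _ (insert_succ_subset_V_succ hS) (card_insert_succ hS hc)
  · intro T hT hc i hi
    have key := hx.2 _ (insert_succ_subset_V_succ hT) (card_insert_succ hT hc) i
      (mem_insert_of_mem hi)
    rwa [sigmaT_insert (succ_notMem_of_subset_V hT), hx0 T hT hc, zero_add,
      erase_insert_of_ne (succ_ne_of_mem_subset_V hT hi)] at key

lemma eq_zero_of_add_eq_zeroExtension {m n : ℕ} {s : ℝ} {d x y : Finset ℕ → ℝ}
    (hx : inSMET (m + 1) (n + 1) s x) (hy : inSMET (m + 1) (n + 1) s y)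
    (hsum : ∀ S, S ⊆ V (n + 1) ∧ S.card = m + 2 → zeroExtension n d S = x S + y S) :
    ∀ S ⊆ V n, S.card = m + 2 → x S = 0 := by
  intro S hS hc
  have hS' := hS.trans (V_subset_V_succ n)
  have hxy := hsum S ⟨hS', hc⟩
  rw [zeroExtension_of_subset d hS] at hxy
  linarith [hx.1 S hS' hc, hy.1 S hS' hc]

lemma eq_mul_zeroExtension_of_link {m n : ℕ} {d z : Finset ℕ → ℝ} {c : ℝ}
    (hz0 : ∀ S ⊆ V n, S.card = m + 2 → z S = 0)
    (hzc : ∀ S, S ⊆ V n ∧ S.card = m + 1 → link (n + 1) z S = c * d S) :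
    ∀ S, S ⊆ V (n + 1) ∧ S.card = m + 2 → z S = c * zeroExtension n d S := by
  rintro S ⟨hS, hc⟩
  obtain hSn | ⟨S, hSn, hcS, rfl⟩ := subset_V_succ_cases hS hc
  · rw [hz0 S hSn hc, zeroExtension_of_subset d hSn, mul_zero]
  · rw [zeroExtension_insert d hSn]
    exact hzc S ⟨hSn, hcS⟩

theorem zeroExtension_extreme_general (m n : ℕ) (s : ℝ) (d : Finset ℕ → ℝ)
    (hd : IsExtremeRayOn (inSMET m n s) (fun S => S ⊆ V n ∧ S.card = m + 1) d) :
    IsExtremeRayOn (inSMET (m + 1) (n + 1) s)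
      (fun S => S ⊆ V (n + 1) ∧ S.card = m + 2) (zeroExtension n d) := by
  obtain ⟨hdC, ⟨S₀, ⟨hS₀, hS₀card⟩, hdS₀⟩, hdext⟩ := hd
  refine ⟨inSMET_zeroExtension hdC, ⟨insert (n + 1) S₀,
    ⟨insert_succ_subset_V_succ hS₀, card_insert_succ hS₀ hS₀card⟩, ?_⟩, ?_⟩
  · rwa [zeroExtension_insert d hS₀]
  intro x y hx hy hsum
  have hx0 := eq_zero_of_add_eq_zeroExtension hx hy hsum
  have hy0 := eq_zero_of_add_eq_zeroExtension hy hx fun S hS => (hsum S hS).trans (add_comm _ _)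
  have hdecomp : ∀ S, S ⊆ V n ∧ S.card = m + 1 →
      d S = link (n + 1) x S + link (n + 1) y S := by
    rintro S ⟨hS, hc⟩
    rw [← zeroExtension_insert d hS]
    exact hsum _ ⟨insert_succ_subset_V_succ hS, card_insert_succ hS hc⟩
  obtain ⟨⟨c, hc, hxc⟩, ⟨c', hc', hyc'⟩⟩ :=
    hdext _ _ (inSMET_link hx hx0) (inSMET_link hy hy0) hdecomp
  exact ⟨⟨c, hc, eq_mul_zeroExtension_of_link hx0 hxc⟩,
    ⟨c', hc', eq_mul_zeroExtension_of_link hy0 hyc'⟩⟩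

/-- Zero-extension of any extreme ray of `SMET m n s` is an extreme ray of
`SMET (m+1) (n+1) s`. -/
theorem zeroExtension_extreme (m n : ℕ) (hm : 1 ≤ m) (hn : m + 2 ≤ n)
    (s : ℝ) (hs : 0 < s) (d : Finset ℕ → ℝ)
    (hd : IsExtremeRayOn (inSMET m n s) (fun S => S ⊆ V n ∧ S.card = m + 1) d) :
    IsExtremeRayOn (inSMET (m + 1) (n + 1) s)
      (fun S => S ⊆ V (n + 1) ∧ S.card = m + 2) (zeroExtension n d) :=
  zeroExtension_extreme_general m n s d hd
end

section
/- Let m ≥ 1 be an integer and s a real number with 0 < s < m+1, and consider the cone SMET^{m,s}_{m+2} = { d ∈ ℝ^{m+2} : 0 ≤ (s+1)·d_k ≤ Σ_{i=1}^{m+2} d_i for all k }. A nonzero vector d ∈ SMET^{m,s}_{m+2} lies on an extreme ray of this cone if and only if d is a positive multiple of a vector having exactly ⌊s⌋+1 coordinates equal to 1, one coordinate equal to s−⌊s⌋, and all remaining coordinates equal to 0. -/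
/-!
Write `S = ∑ i, d i`. A coordinate of `d` in the cone is *tight* if `(s+1)·d k = S`, zero, or
*free* (strictly between the two bounds). Two free coordinates `i₁ ≠ i₂` would let us move `d`
by `± ε (e_{i₁} - e_{i₂})` inside the cone without changing `S`, so an extreme ray has at most
one free coordinate `j`, and at least one non-tight coordinate since `s + 1 < m + 2`. Then `d` is
`S/(s+1)` on the tight set `A` and `S·(s+1-|A|)/(s+1)` at `j`, and `0 ≤ s+1-|A| < 1` forces
`|A| = ⌊s⌋+1`. Conversely, if `d = x + y` inside the cone, then `x` and `y` inherit the tight and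
the zero coordinates of the pattern, and these determine a vector up to a scalar.
-/

/-- The cone `SMET^{m,s}_{m+2}` in coordinates: all `d ∈ ℝ^{m+2}` with
`0 ≤ (s+1)·d k ≤ Σ_i d i` for every `k`. -/
def smetSimple (m : ℕ) (s : ℝ) (d : Fin (m + 2) → ℝ) : Prop :=
  ∀ k, 0 ≤ (s + 1) * d k ∧ (s + 1) * d k ≤ ∑ i, d i

/-- A nonzero `d` in a convex cone `C ⊆ ℝ^N` lies on an extreme ray of `C` if whenever
`d = x + y` with `x, y ∈ C`, both `x` and `y` are nonnegative scalar multiples of `d`. -/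
def IsExtremeRayFin (N : ℕ) (C : (Fin N → ℝ) → Prop) (d : Fin N → ℝ) : Prop :=
  C d ∧ d ≠ 0 ∧ ∀ x y : Fin N → ℝ, C x → C y → d = x + y →
    ((∃ c : ℝ, 0 ≤ c ∧ x = c • d) ∧ (∃ c : ℝ, 0 ≤ c ∧ y = c • d))

open Finset

def rayPattern {n : ℕ} (A : Finset (Fin n)) (j : Fin n) (r : ℝ) : Fin n → ℝ :=
  fun i => if i ∈ A then 1 else if i = j then r else 0

theorem sum_rayPattern {n : ℕ} {A : Finset (Fin n)} {j : Fin n} (hj : j ∉ A) (r : ℝ) :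
    ∑ i, rayPattern A j r i = A.card + r := by
  have hA : ∀ i ∈ A, rayPattern A j r i = 1 := fun i hi => if_pos hi
  rw [← sum_add_sum_compl A, sum_congr rfl hA,
    sum_eq_single_of_mem j (mem_compl.2 hj) fun k hk hkj => by
      simp [rayPattern, mem_compl.1 hk, hkj]]
  simp [rayPattern, hj]

theorem eq_smul_rayPattern_of_tight {n : ℕ} {t : ℝ} {x : Fin n → ℝ} {A : Finset (Fin n)}
    {j : Fin n} (ht : t ≠ 0) (hj : j ∉ A) (htight : ∀ k ∈ A, t * x k = ∑ i, x i)
    (hzero : ∀ k ∉ A, k ≠ j → x k = 0) :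
    x = ((∑ i, x i) / t) • rayPattern A j (t - A.card) := by
  set c := (∑ i, x i) / t with hc
  have hxA : ∀ k ∈ A, x k = c := fun k hk => by
    rw [hc, eq_div_iff ht, mul_comm]; exact htight k hk
  have hsum : ∑ i, x i = A.card * c + x j := by
    rw [← sum_add_sum_compl A, sum_congr rfl hxA, sum_const, nsmul_eq_mul,
      sum_eq_single_of_mem j (mem_compl.2 hj) fun k hk hkj => hzero k (mem_compl.1 hk) hkj]
  have hxj : x j = c * (t - A.card) := by
    have : ∑ i, x i = c * t := by rw [hc, div_mul_cancel₀ _ ht]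
    linear_combination this - hsum
  funext i
  simp only [Pi.smul_apply, smul_eq_mul, rayPattern]
  split_ifs with hiA hij
  · rw [hxA i hiA, mul_one]
  · rw [hij, hxj]
  · rw [hzero i hiA hij, mul_zero]

theorem IsExtremeRayFin.exists_eq_smul_of_add_of_sub {N : ℕ} {C : (Fin N → ℝ) → Prop}
    {d u : Fin N → ℝ} (hC : ∀ x, C x → C ((2 : ℝ)⁻¹ • x)) (h : IsExtremeRayFin N C d)
    (hadd : C (d + u)) (hsub : C (d - u)) : ∃ c : ℝ, u = c • d := by
  obtain ⟨⟨c, -, hc⟩, -⟩ := h.2.2 _ _ (hC _ hadd) (hC _ hsub) (by module)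
  exact ⟨2 * c - 1, by linear_combination (norm := module) (2 : ℝ) • hc⟩

theorem exists_pos_forall_abs_le_of_lt {t v S : ℝ} (ht : 0 < t) (hv : 0 < v) (hvS : t * v < S) :
    ∃ δ : ℝ, 0 < δ ∧ ∀ a : ℝ, |a| ≤ δ → 0 ≤ t * (v + a) ∧ t * (v + a) ≤ S := by
  refine ⟨min v ((S - t * v) / t), lt_min hv (div_pos (by linarith) ht), fun a ha => ?_⟩
  have h₁ : |a| ≤ v := ha.trans (min_le_left _ _)
  have h₂ : t * |a| ≤ S - t * v := (le_div_iff₀' ht).1 (ha.trans (min_le_right _ _))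
  have h₃ : t * a ≤ t * |a| := mul_le_mul_of_nonneg_left (le_abs_self a) ht.le
  exact ⟨mul_nonneg ht.le (by linarith [neg_abs_le a]), by linarith⟩

namespace smetSimple

variable {m : ℕ} {s : ℝ} {d x y : Fin (m + 2) → ℝ}

theorem nonneg (hs : 0 < s + 1) (hd : smetSimple m s d) (k : Fin (m + 2)) : 0 ≤ d k :=
  nonneg_of_mul_nonneg_right (hd k).1 hs

theorem sum_pos (hs : 0 < s + 1) (hd : smetSimple m s d) (hne : d ≠ 0) : 0 < ∑ i, d i := by
  obtain ⟨k, hk⟩ := Function.ne_iff.1 hne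
  exact sum_pos' (fun i _ => hd.nonneg hs i) ⟨k, mem_univ k, (hd.nonneg hs k).lt_of_ne' hk⟩

theorem smul {c : ℝ} (hc : 0 ≤ c) (hd : smetSimple m s d) : smetSimple m s (c • d) := by
  intro k
  simp only [Pi.smul_apply, smul_eq_mul, ← mul_sum, mul_left_comm (s + 1) c]
  exact ⟨mul_nonneg hc (hd k).1, mul_le_mul_of_nonneg_left (hd k).2 hc⟩

theorem exists_mul_lt_sum (hs : s < m + 1) (hd : smetSimple m s d) (hS : 0 < ∑ i, d i) :
    ∃ j, (s + 1) * d j < ∑ i, d i := by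
  by_contra! h
  have hall : (s + 1) * ∑ i, d i = (m + 2) * ∑ i, d i := by
    rw [mul_sum, sum_congr rfl fun k _ => le_antisymm (hd k).2 (h k)]
    simp
  nlinarith

theorem exists_add_smul_single_sub_single (hs : 0 < s + 1) (hd : smetSimple m s d)
    {i₁ i₂ : Fin (m + 2)} (hi : i₁ ≠ i₂) (h₁ : 0 < d i₁ ∧ (s + 1) * d i₁ < ∑ i, d i)
    (h₂ : 0 < d i₂ ∧ (s + 1) * d i₂ < ∑ i, d i) :
    ∃ ε : ℝ, 0 < ε ∧ ∀ a : ℝ, |a| ≤ ε → smetSimple m s (d + a • (Pi.single i₁ 1 - Pi.single i₂ 1)) := by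
  obtain ⟨δ₁, hδ₁, hb₁⟩ := exists_pos_forall_abs_le_of_lt hs h₁.1 h₁.2
  obtain ⟨δ₂, hδ₂, hb₂⟩ := exists_pos_forall_abs_le_of_lt hs h₂.1 h₂.2
  refine ⟨min δ₁ δ₂, lt_min hδ₁ hδ₂, fun a ha k => ?_⟩
  have hsum : ∑ i, (d + a • (Pi.single i₁ 1 - Pi.single i₂ 1) : Fin (m + 2) → ℝ) i = ∑ i, d i := by
    simp [sum_add_distrib, ← mul_sum, sum_sub_distrib]
  rw [hsum]
  rcases eq_or_ne k i₁ with rfl | hk₁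
  · simpa [hi] using hb₁ a (ha.trans (min_le_left _ _))
  rcases eq_or_ne k i₂ with rfl | hk₂
  · simpa [hi.symm, sub_eq_add_neg] using hb₂ (-a) (by simpa using ha.trans (min_le_right _ _))
  · simpa [hk₁, hk₂] using hd k

theorem mul_eq_sum_of_add (hx : smetSimple m s x) (hy : smetSimple m s y) {k : Fin (m + 2)}
    (hk : (s + 1) * (x + y) k = ∑ i, (x + y) i) : (s + 1) * x k = ∑ i, x i := by
  simp only [Pi.add_apply, sum_add_distrib, mul_add] at hk
  linarith [(hx k).2, (hy k).2]

theorem eq_zero_of_add (hs : 0 < s + 1) (hx : smetSimple m s x) (hy : smetSimple m s y)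
    {k : Fin (m + 2)} (hk : (x + y) k = 0) : x k = 0 := by
  rw [Pi.add_apply] at hk
  linarith [hx.nonneg hs k, hy.nonneg hs k]

theorem eq_smul_rayPattern_of_add (hs : 0 ≤ s) (hx : smetSimple m s x) (hy : smetSimple m s y)
    {c : ℝ} {A : Finset (Fin (m + 2))} {j : Fin (m + 2)} (hj : j ∉ A)
    (hcard : A.card = ⌊s⌋₊ + 1) (hxy : x + y = c • rayPattern A j (s - ⌊s⌋₊)) :
    x = ((∑ i, x i) / (s + 1)) • rayPattern A j (s - ⌊s⌋₊) := by
  have hs1 : 0 < s + 1 := by linarith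
  have hr : (s - ⌊s⌋₊ : ℝ) = s + 1 - A.card := by rw [hcard]; push_cast; ring
  rw [hr] at hxy ⊢
  have hsum : ∑ i, (x + y) i = c * (s + 1) := by
    rw [hxy]
    simp only [Pi.smul_apply, smul_eq_mul, ← mul_sum, sum_rayPattern hj]
    ring
  refine eq_smul_rayPattern_of_tight hs1.ne' hj (fun k hk => hx.mul_eq_sum_of_add hy ?_)
    fun k hkA hkj => hx.eq_zero_of_add hs1 hy ?_
  · rw [hsum, hxy]; simp [rayPattern, hk, mul_comm]
  · rw [hxy]; simp [rayPattern, hkA, hkj]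

theorem exists_eq_smul_rayPattern (hs : 0 ≤ s) (hd : smetSimple m s d) (hne : d ≠ 0)
    {j : Fin (m + 2)} (hj : (s + 1) * d j < ∑ i, d i)
    (hzero : ∀ k, k ≠ j → (s + 1) * d k < ∑ i, d i → d k = 0) :
    ∃ A : Finset (Fin (m + 2)), j ∉ A ∧ A.card = ⌊s⌋₊ + 1 ∧
      d = ((∑ i, d i) / (s + 1)) • rayPattern A j (s - ⌊s⌋₊) := by
  have hs1 : 0 < s + 1 := by linarith
  have hS := hd.sum_pos hs1 hne
  set A := univ.filter fun k => (s + 1) * d k = ∑ i, d i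
  have hjA : j ∉ A := by simpa [A] using hj.ne
  have hform := eq_smul_rayPattern_of_tight hs1.ne' hjA (fun k hk => (mem_filter.1 hk).2)
    fun k hkA hkj => hzero k hkj (lt_of_le_of_ne (hd k).2 (by simpa [A] using hkA))
  have hdj : (s + 1) * d j = (∑ i, d i) * (s + 1 - A.card) := by
    rw [congrFun hform j]
    simp only [Pi.smul_apply, smul_eq_mul, rayPattern, if_neg hjA, ↓reduceIte]
    field_simp
  have h₁ : (A.card : ℝ) ≤ s + 1 := by
    have := (mul_nonneg_iff_of_pos_left hS).1 (hdj ▸ (hd j).1)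
    linarith
  have h₂ : s + 1 < A.card + 1 := by
    have := (mul_lt_iff_lt_one_right hS).1 (hdj ▸ hj)
    linarith
  have hcard : A.card = ⌊s⌋₊ + 1 := by
    rw [← Nat.floor_add_one hs]
    exact ((Nat.floor_eq_iff hs1.le).2 ⟨h₁, h₂⟩).symm
  refine ⟨A, hjA, hcard, ?_⟩
  convert hform using 3
  rw [hcard]; push_cast; ring

end smetSimple

namespace IsExtremeRayFin

variable {m : ℕ} {s : ℝ} {d : Fin (m + 2) → ℝ}

theorem eq_of_smetSimple_free (hs : 0 < s + 1) (h : IsExtremeRayFin (m + 2) (smetSimple m s) d)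
    {i₁ i₂ : Fin (m + 2)} (h₁ : 0 < d i₁ ∧ (s + 1) * d i₁ < ∑ i, d i)
    (h₂ : 0 < d i₂ ∧ (s + 1) * d i₂ < ∑ i, d i) : i₁ = i₂ := by
  by_contra hi
  obtain ⟨ε, hε, hmem⟩ := h.1.exists_add_smul_single_sub_single hs hi h₁ h₂
  obtain ⟨c, hc⟩ := h.exists_eq_smul_of_add_of_sub (fun x hx => hx.smul (by norm_num))
    (hmem ε (abs_of_pos hε).le) (by
      rw [sub_eq_add_neg, ← neg_smul]; exact hmem (-ε) (by rw [abs_neg, abs_of_pos hε]))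
  have hsum := congrArg (fun v => ∑ i, v i) hc
  simp only [Pi.smul_apply, smul_eq_mul, ← mul_sum, Pi.sub_apply, sum_sub_distrib,
    sum_pi_single', mem_univ, if_true, sub_self, mul_zero] at hsum
  have hc0 : c = 0 := by
    rcases mul_eq_zero.1 hsum.symm with hc0 | hS
    · exact hc0
    · exact absurd hS (h.1.sum_pos hs h.2.1).ne'
  have hεi := congrFun hc i₁
  simp [hc0, hi] at hεi
  exact hε.ne' hεi

theorem exists_smetSimple_support (hs : 0 < s + 1) (hsm : s < m + 1)
    (h : IsExtremeRayFin (m + 2) (smetSimple m s) d) :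
    ∃ j, (s + 1) * d j < ∑ i, d i ∧ ∀ k, k ≠ j → (s + 1) * d k < ∑ i, d i → d k = 0 := by
  have hnonneg := h.1.nonneg hs
  by_cases hfree : ∃ j, 0 < d j ∧ (s + 1) * d j < ∑ i, d i
  · obtain ⟨j, hj⟩ := hfree
    refine ⟨j, hj.2, fun k hkj hk => by_contra fun hk0 => hkj ?_⟩
    exact h.eq_of_smetSimple_free hs ⟨(hnonneg k).lt_of_ne' hk0, hk⟩ hj
  · push Not at hfree
    obtain ⟨j, hj⟩ := h.1.exists_mul_lt_sum hsm (h.1.sum_pos hs h.2.1)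
    exact ⟨j, hj, fun k _ hk =>
      le_antisymm (not_lt.1 fun hpos => (hfree k hpos).not_gt hk) (hnonneg k)⟩

end IsExtremeRayFin

theorem isExtremeRayFin_smetSimple_of_eq_smul {m : ℕ} {s c : ℝ} {d : Fin (m + 2) → ℝ}
    {A : Finset (Fin (m + 2))} {j : Fin (m + 2)} (hs : 0 ≤ s) (hd : smetSimple m s d)
    (hne : d ≠ 0) (hc : 0 < c) (hj : j ∉ A) (hcard : A.card = ⌊s⌋₊ + 1)
    (hdP : d = c • rayPattern A j (s - ⌊s⌋₊)) : IsExtremeRayFin (m + 2) (smetSimple m s) d := by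
  have hs1 : 0 < s + 1 := by linarith
  have key : ∀ x y, smetSimple m s x → smetSimple m s y → d = x + y →
      ∃ c' : ℝ, 0 ≤ c' ∧ x = c' • d := by
    intro x y hx hy hxy
    have hSx : 0 ≤ ∑ i, x i := sum_nonneg fun i _ => hx.nonneg hs1 i
    refine ⟨(∑ i, x i) / (s + 1) / c, by positivity, ?_⟩
    conv_lhs => rw [hx.eq_smul_rayPattern_of_add hs hy hj hcard (hxy.symm.trans hdP)]
    rw [hdP, smul_smul, div_mul_cancel₀ _ hc.ne']
  exact ⟨hd, hne, fun x y hx hy hxy =>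
    ⟨key x y hx hy hxy, key y x hy hx (hxy.trans (add_comm x y))⟩⟩

theorem smetSimple_extreme_iff_general (m : ℕ) (s : ℝ)
    (hs0 : 0 < s) (hs1 : s < (m : ℝ) + 1)
    (d : Fin (m + 2) → ℝ) (hd : smetSimple m s d) (hne : d ≠ 0) :
    IsExtremeRayFin (m + 2) (smetSimple m s) d ↔
      ∃ c : ℝ, 0 < c ∧ ∃ (A : Finset (Fin (m + 2))) (j : Fin (m + 2)),
        j ∉ A ∧ A.card = ⌊s⌋₊ + 1 ∧
        ∀ i, d i = c * (if i ∈ A then 1 else if i = j then s - (⌊s⌋₊ : ℝ) else 0) := by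
  have hs : 0 < s + 1 := by linarith
  constructor
  · intro h
    obtain ⟨j, hj, hzero⟩ := h.exists_smetSimple_support hs hs1
    obtain ⟨A, hjA, hcard, hdP⟩ := hd.exists_eq_smul_rayPattern hs0.le hne hj hzero
    exact ⟨_, div_pos (hd.sum_pos hs hne) hs, A, j, hjA, hcard, congrFun hdP⟩
  · rintro ⟨c, hc, A, j, hjA, hcard, hdP⟩
    exact isExtremeRayFin_smetSimple_of_eq_smul hs0.le hd hne hc hjA hcard (funext hdP)

/-- A nonzero `d` in the cone `SMET^{m,s}_{m+2}` (for `0 < s < m+1`) lies on an extreme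
ray if and only if `d` is a positive multiple of a vector with exactly `⌊s⌋ + 1`
coordinates equal to `1`, one coordinate equal to `s - ⌊s⌋`, and all remaining
coordinates equal to `0`. -/
theorem smetSimple_extreme_iff (m : ℕ) (hm : 1 ≤ m) (s : ℝ)
    (hs0 : 0 < s) (hs1 : s < (m : ℝ) + 1)
    (d : Fin (m + 2) → ℝ) (hd : smetSimple m s d) (hne : d ≠ 0) :
    IsExtremeRayFin (m + 2) (smetSimple m s) d ↔
      ∃ c : ℝ, 0 < c ∧ ∃ (A : Finset (Fin (m + 2))) (j : Fin (m + 2)),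
        j ∉ A ∧ A.card = ⌊s⌋₊ + 1 ∧
        ∀ i, d i = c * (if i ∈ A then 1 else if i = j then s - (⌊s⌋₊ : ℝ) else 0) :=
  smetSimple_extreme_iff_general m s hs0 hs1 d hd hne
end

section
/- Let m ≥ 1 and let s be an integer with 1 ≤ s ≤ m. Let x and y be two distinct 0,1-valued vectors in ℝ^{m+2}, each with exactly s+1 coordinates equal to 1, and let i = |supp(x) ∩ supp(y)| be the number of positions where both equal 1. Consider the linear functionals on ℝ^{m+2} given by f_k(d) = d_k and g_k(d) = Σ_{j=1}^{m+2} d_j − (s+1)·d_k for k = 1,…,m+2 (the defining functionals of the cone SMET^{m,s}_{m+2}). Then the span of the set of those functionals among the f_k and g_k that vanish at both x and y has dimension m + 2i − 2s; in particular this dimension equals m if and only if i = s. -/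
/-- The coordinate functional `f k : d ↦ d k` on `ℝ^{m+2}`. -/
def coordFunctional (m : ℕ) (k : Fin (m + 2)) : (Fin (m + 2) → ℝ) →ₗ[ℝ] ℝ :=
  LinearMap.proj k

/-- The simplex functional `g k : d ↦ (Σ_j d j) - (s+1)·d k` on `ℝ^{m+2}`. -/
noncomputable def simplexFunctional (m s : ℕ) (k : Fin (m + 2)) : (Fin (m + 2) → ℝ) →ₗ[ℝ] ℝ :=
  (∑ j, coordFunctional m j) - ((s : ℝ) + 1) • coordFunctional m k

/-- The support of a vector `x ∈ ℝ^{m+2}`. -/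
noncomputable def suppOf (m : ℕ) (x : Fin (m + 2) → ℝ) : Finset (Fin (m + 2)) :=
  Finset.univ.filter (fun j => x j ≠ 0)

/-!
Write `X, Y` for the supports of `x, y`. Since `Σ x = s + 1`, we get `g k x = (s + 1)(1 - x k)`,
so the functionals vanishing at `x` and `y` are the `f k` with `k ∉ X ∪ Y` and the `g k` with
`k ∈ X ∩ Y`; there are `(m + 2 - (2s + 2 - i)) + i` of them. They are linearly independent as
soon as some coordinate `p` lies in neither index set, which holds because `X ≠ Y` have the same
size. The same fact gives `i ≤ s`, which makes the truncated subtraction harmless.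
-/

open Finset

theorem linearIndependent_of_apply_eq_ite {ι R M : Type*} [CommRing R] [AddCommMonoid M]
    [Module R M] [DecidableEq ι] {φ : ι → Module.Dual R M} (d : ι → M)
    (h : ∀ i j, φ i (d j) = if i = j then 1 else 0) : LinearIndependent R φ := by
  rw [linearIndependent_iff']
  intro t c hc j hj
  simpa [h, hj] using congr($hc (d j))

theorem Finset.card_compl_union_add_card_add_card {α : Type*} [Fintype α] [DecidableEq α]
    (X Y : Finset α) : #(X ∪ Y)ᶜ + #X + #Y = Fintype.card α + #(X ∩ Y) := by
  have := card_union_add_card_inter X Y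
  have := (X ∪ Y).card_le_univ
  rw [card_compl]
  omega

section ZeroOneVector

variable {m : ℕ} {x y : Fin (m + 2) → ℝ}

theorem apply_eq_ite_mem_suppOf (hx : ∀ j, x j = 0 ∨ x j = 1) (j : Fin (m + 2)) :
    x j = if j ∈ suppOf m x then 1 else 0 := by
  rcases hx j with h | h <;> simp [suppOf, h]

theorem sum_eq_card_suppOf (hx : ∀ j, x j = 0 ∨ x j = 1) : ∑ j, x j = #(suppOf m x) := by
  simp_rw [apply_eq_ite_mem_suppOf hx, sum_boole, filter_mem_eq_inter, univ_inter]

theorem eq_of_suppOf_eq (hx : ∀ j, x j = 0 ∨ x j = 1) (hy : ∀ j, y j = 0 ∨ y j = 1)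
    (h : suppOf m x = suppOf m y) : x = y := by
  ext j
  rw [apply_eq_ite_mem_suppOf hx, apply_eq_ite_mem_suppOf hy, h]

theorem coordFunctional_apply_eq_zero_iff (k : Fin (m + 2)) :
    coordFunctional m k x = 0 ↔ k ∉ suppOf m x := by
  simp [coordFunctional, suppOf]

theorem simplexFunctional_apply (s : ℕ) (k : Fin (m + 2)) (d : Fin (m + 2) → ℝ) :
    simplexFunctional m s k d = ∑ j, d j - (s + 1) * d k := by
  simp [simplexFunctional, coordFunctional]

theorem simplexFunctional_apply_eq_zero_iff {s : ℕ} (hx : ∀ j, x j = 0 ∨ x j = 1)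
    (hcard : #(suppOf m x) = s + 1) (k : Fin (m + 2)) :
    simplexFunctional m s k x = 0 ↔ k ∈ suppOf m x := by
  rw [simplexFunctional_apply, sum_eq_card_suppOf hx, hcard, apply_eq_ite_mem_suppOf hx k]
  split_ifs with hk
  · simp [hk]
  · simp only [hk, iff_false, mul_zero, sub_zero]
    positivity

end ZeroOneVector

noncomputable def facetFamily (m s : ℕ) (A B : Finset (Fin (m + 2))) :
    A ⊕ B → Module.Dual ℝ (Fin (m + 2) → ℝ) :=
  Sum.elim (fun a => coordFunctional m a) (fun b => simplexFunctional m s b)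

theorem linearIndependent_facetFamily (m s : ℕ) {A B : Finset (Fin (m + 2))} (hAB : Disjoint A B)
    {p : Fin (m + 2)} (hpA : p ∉ A) (hpB : p ∉ B) :
    LinearIndependent ℝ (facetFamily m s A B) := by
  have hs : (s + 1 : ℝ) ≠ 0 := by positivity
  let e : Fin (m + 2) → Fin (m + 2) → ℝ := fun j => Pi.single j 1
  -- As `p ∉ A ∪ B` and `A ∩ B = ∅`, every cross pairing with these test vectors vanishes.
  refine linearIndependent_of_apply_eq_ite
    (Sum.elim (fun a => e a - e p) (fun b => (s + 1 : ℝ)⁻¹ • (e p - e b))) ?_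
  rintro (⟨a, ha⟩ | ⟨b, hb⟩) (⟨a', ha'⟩ | ⟨b', hb'⟩)
  · simp [facetFamily, coordFunctional, e, Pi.single_apply, ne_of_mem_of_not_mem ha hpA]
  · simp [facetFamily, coordFunctional, e, ne_of_mem_of_not_mem ha hpA,
      ne_of_mem_of_not_mem ha (disjoint_right.mp hAB hb')]
  · simp [facetFamily, simplexFunctional_apply, e, Pi.single_apply, ne_of_mem_of_not_mem hb hpB,
      ne_of_mem_of_not_mem hb (disjoint_left.mp hAB ha')]
  · simp [facetFamily, simplexFunctional_apply, e, Pi.single_apply, ne_of_mem_of_not_mem hb hpB,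
      hs]

theorem setOf_vanishing_facets_eq_range_facetFamily {m s : ℕ} {x y : Fin (m + 2) → ℝ}
    (hx : ∀ j, x j = 0 ∨ x j = 1) (hy : ∀ j, y j = 0 ∨ y j = 1)
    (hxcard : #(suppOf m x) = s + 1) (hycard : #(suppOf m y) = s + 1) :
    {φ : (Fin (m + 2) → ℝ) →ₗ[ℝ] ℝ |
        (∃ k, φ = coordFunctional m k ∨ φ = simplexFunctional m s k) ∧
          φ x = 0 ∧ φ y = 0} =
      Set.range (facetFamily m s (suppOf m x ∪ suppOf m y)ᶜ (suppOf m x ∩ suppOf m y)) := by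
  ext φ
  simp only [Set.mem_ofPred_eq, Set.mem_range, Sum.exists, facetFamily, Sum.elim_inl,
    Sum.elim_inr, Subtype.exists, mem_compl, mem_union, mem_inter]
  constructor
  · rintro ⟨⟨k, rfl | rfl⟩, h0x, h0y⟩
    · left
      rw [coordFunctional_apply_eq_zero_iff] at h0x h0y
      exact ⟨k, by tauto, rfl⟩
    · right
      rw [simplexFunctional_apply_eq_zero_iff hx hxcard] at h0x
      rw [simplexFunctional_apply_eq_zero_iff hy hycard] at h0y
      exact ⟨k, ⟨h0x, h0y⟩, rfl⟩
  · rintro (⟨k, hk, rfl⟩ | ⟨k, hk, rfl⟩)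
    · simp only [coordFunctional_apply_eq_zero_iff]
      exact ⟨⟨k, .inl rfl⟩, by tauto⟩
    · rw [simplexFunctional_apply_eq_zero_iff hx hxcard,
        simplexFunctional_apply_eq_zero_iff hy hycard]
      exact ⟨⟨k, .inr rfl⟩, hk⟩

theorem rank_common_facets_general (m s : ℕ)
    (x y : Fin (m + 2) → ℝ)
    (hx01 : ∀ j, x j = 0 ∨ x j = 1) (hy01 : ∀ j, y j = 0 ∨ y j = 1)
    (hxcard : (suppOf m x).card = s + 1) (hycard : (suppOf m y).card = s + 1)
    (hxy : x ≠ y)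
    (i : ℕ) (hi : i = (suppOf m x ∩ suppOf m y).card) :
    Module.finrank ℝ (Submodule.span ℝ
        {φ : (Fin (m + 2) → ℝ) →ₗ[ℝ] ℝ |
          (∃ k, φ = coordFunctional m k ∨ φ = simplexFunctional m s k) ∧
          φ x = 0 ∧ φ y = 0}) = m + 2 * i - 2 * s ∧
    (m + 2 * i - 2 * s = m ↔ i = s) := by
  set X := suppOf m x
  set Y := suppOf m y
  obtain ⟨p, hpX, hpY⟩ : ∃ p ∈ X, p ∉ Y := not_subset.mp fun hXY =>
    hxy (eq_of_suppOf_eq hx01 hy01 (eq_of_subset_of_card_le hXY (hycard.trans hxcard.symm).le))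
  have hi_lt : #(X ∩ Y) < #X :=
    card_lt_card ⟨inter_subset_left, fun h => hpY (mem_inter.mp (h hpX)).2⟩
  have hLI : LinearIndependent ℝ (facetFamily m s (X ∪ Y)ᶜ (X ∩ Y)) :=
    linearIndependent_facetFamily m s (p := p)
      (disjoint_compl_left.mono_right inter_subset_union) (by simp [hpX]) (by simp [hpY])
  have hcard := card_compl_union_add_card_add_card X Y
  rw [Fintype.card_fin] at hcard
  rw [setOf_vanishing_facets_eq_range_facetFamily hx01 hy01 hxcard hycard,
    finrank_span_eq_card hLI, Fintype.card_sum, Fintype.card_coe, Fintype.card_coe]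
  omega

/-- For an integer `1 ≤ s ≤ m` and two distinct `0,1`-vectors `x, y` in `ℝ^{m+2}` with
exactly `s+1` ones each and `i` common ones, the span of the defining functionals of
`SMET^{m,s}_{m+2}` vanishing at both `x` and `y` has dimension `m + 2i - 2s`; in
particular this dimension equals `m` if and only if `i = s`. -/
theorem rank_common_facets (m s : ℕ) (hs1 : 1 ≤ s) (hsm : s ≤ m)
    (x y : Fin (m + 2) → ℝ)
    (hx01 : ∀ j, x j = 0 ∨ x j = 1) (hy01 : ∀ j, y j = 0 ∨ y j = 1)
    (hxcard : (suppOf m x).card = s + 1) (hycard : (suppOf m y).card = s + 1)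
    (hxy : x ≠ y)
    (i : ℕ) (hi : i = (suppOf m x ∩ suppOf m y).card) :
    Module.finrank ℝ (Submodule.span ℝ
        {φ : (Fin (m + 2) → ℝ) →ₗ[ℝ] ℝ |
          (∃ k, φ = coordFunctional m k ∨ φ = simplexFunctional m s k) ∧
          φ x = 0 ∧ φ y = 0}) = m + 2 * i - 2 * s ∧
    (m + 2 * i - 2 * s = m ↔ i = s) :=
  rank_common_facets_general m s x y hx01 hy01 hxcard hycard hxy i hi
end

section
/- Let m ≥ 1 and n ≥ m+1 be integers, and let (S_1,…,S_{m+1}) be a partition of V_n = {1,…,n} into m+1 nonempty parts. Then the m-partition hemi-metric α(S_1,…,S_{m+1}) lies on an extreme ray of the cone HMET^m_n. -/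
/-- Membership in the cone `HMET m n` of `m`-hemi-metrics: nonnegativity on every
`(m+1)`-subset of `V n`, and the `m`-simplex inequalities. -/
def inHMET (m n : ℕ) (d : Finset ℕ → ℝ) : Prop :=
  (∀ S ⊆ V n, S.card = m + 1 → 0 ≤ d S) ∧
  (∀ T ⊆ V n, T.card = m + 2 → ∀ i ∈ T, 2 * d (T.erase i) ≤ sigmaT d T)

/-- The `m`-partition hemi-metric of a partition `P` of `V n` into `m+1` parts: its value
on an `(m+1)`-subset `S` is `1` if `S` meets every part in exactly one element, and `0`
otherwise. -/
def alphaPartition (m : ℕ) (P : Fin (m + 1) → Finset ℕ) (S : Finset ℕ) : ℝ :=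
  if ∀ j, (S ∩ P j).card = 1 then 1 else 0

/-! Enlarging a transversal `S` of the partition (one point in each part) by a point `p` gives a
set `T` whose faces `T \ {k}` are transversals exactly for the two points `k` of `T` in the part of
`p`. Hence `Σ_T α ∈ {0, 2}` and `α` satisfies every simplex inequality. If `α = x + y` in the
cone, then `x` vanishes off the transversals by nonnegativity, so the simplex inequalities of `T`
at those two points force `x` to agree on the two transversal faces of `T`. Any transversal is
reached from any other by such one-point exchanges, so `x` is constant on transversals, i.e. a
multiple of `α`. -/

open Finset Function

section Transversal

theorem eq_of_mem_of_mem_of_pairwiseDisjoint {ι α : Type*} {P : ι → Finset α}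
    (hP : Pairwise (Disjoint on P)) {a : α} {i j : ι}
    (hi : a ∈ P i) (hj : a ∈ P j) : i = j := by
  by_contra hij
  exact disjoint_left.mp (hP hij) hi hj

variable {ι α : Type*} [DecidableEq α] {P : ι → Finset α}

def IsTransversal (P : ι → Finset α) (S : Finset α) : Prop :=
  ∀ j, #(S ∩ P j) = 1

theorem IsTransversal.card_inter_eq_two {T : Finset α} {i : α} {j : ι} (hiT : i ∈ T)
    (hij : i ∈ P j) (hT : IsTransversal P (T.erase i)) : #(T ∩ P j) = 2 := by
  rw [← card_erase_add_one (mem_inter.mpr ⟨hiT, hij⟩), ← erase_inter, hT j]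

variable [Fintype ι]

instance (P : ι → Finset α) : DecidablePred (IsTransversal P) :=
  fun S => inferInstanceAs (Decidable (∀ j, #(S ∩ P j) = 1))

theorem exists_isTransversal (hP : Pairwise (Disjoint on P))
    (hne : ∀ j, (P j).Nonempty) : ∃ S ⊆ univ.biUnion P, IsTransversal P S := by
  choose g hg using hne
  refine ⟨univ.image g, image_subset_iff.mpr fun j _ => mem_biUnion.mpr ⟨j, mem_univ j, hg j⟩,
    fun j => card_eq_one.mpr ⟨g j, ?_⟩⟩
  ext a
  simp only [mem_inter, mem_image, mem_univ, true_and, mem_singleton]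
  constructor
  · rintro ⟨⟨i, rfl⟩, hi⟩
    rw [eq_of_mem_of_mem_of_pairwiseDisjoint hP (hg i) hi]
  · rintro rfl
    exact ⟨⟨j, rfl⟩, hg j⟩

namespace IsTransversal

theorem card_eq (hP : Pairwise (Disjoint on P)) {S : Finset α}
    (hS : IsTransversal P S) (hSP : S ⊆ univ.biUnion P) : #S = Fintype.card ι := by
  rw [← inter_eq_left.mpr hSP, inter_biUnion,
    card_biUnion fun i _ j _ hij => (hP hij).mono inter_subset_right inter_subset_right]
  simp [hS _]

theorem eq_of_subset (hP : Pairwise (Disjoint on P)) {S S' : Finset α}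
    (hS : IsTransversal P S) (hS' : IsTransversal P S') (hSP : S ⊆ univ.biUnion P)
    (hS'P : S' ⊆ univ.biUnion P) (h : S ⊆ S') : S = S' :=
  eq_of_subset_of_card_le h (by rw [hS.card_eq hP hSP, hS'.card_eq hP hS'P])

theorem filter_isTransversal_erase (hP : Pairwise (Disjoint on P)) {T : Finset α}
    {i : α} {j : ι} (hiT : i ∈ T) (hij : i ∈ P j) (hT : IsTransversal P (T.erase i)) :
    T.filter (fun k => IsTransversal P (T.erase k)) = T ∩ P j := by
  have hTj := card_inter_eq_two hiT hij hT
  ext k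
  rw [mem_filter, mem_inter, and_congr_right_iff]
  intro hkT
  constructor
  · intro hk
    by_contra hkj
    have := hk j
    rw [erase_inter, erase_eq_of_notMem fun h => hkj (mem_inter.mp h).2] at this
    omega
  · intro hkj q
    rw [erase_inter]
    by_cases hq : q = j
    · subst hq
      rw [card_erase_of_mem (mem_inter.mpr ⟨hkT, hkj⟩), hTj]
    · have hi : i ∉ T ∩ P q := fun h =>
        hq (eq_of_mem_of_mem_of_pairwiseDisjoint hP (mem_inter.mp h).2 hij)
      have hk : k ∉ T ∩ P q := fun h =>
        hq (eq_of_mem_of_mem_of_pairwiseDisjoint hP (mem_inter.mp h).2 hkj)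
      rw [erase_eq_of_notMem hk, ← erase_eq_of_notMem hi, ← erase_inter]
      exact hT q

theorem apply_eq_of_exchange {β : Type*} (hP : Pairwise (Disjoint on P)) {f : Finset α → β}
    (hf : ∀ T ⊆ univ.biUnion P, ∀ a ∈ T, ∀ b ∈ T, IsTransversal P (T.erase a) →
      IsTransversal P (T.erase b) → f (T.erase a) = f (T.erase b))
    {S S' : Finset α} (hS : IsTransversal P S) (hS' : IsTransversal P S')
    (hSP : S ⊆ univ.biUnion P) (hS'P : S' ⊆ univ.biUnion P) : f S = f S' := by
  induction hd : #(S' \ S) using Nat.strong_induction_on generalizing S with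
  | _ d ih =>
  obtain h | ⟨p, hp⟩ := (S' \ S).eq_empty_or_nonempty
  · rw [hS'.eq_of_subset hP hS hS'P hSP (sdiff_eq_empty_iff_subset.mp h)]
  obtain ⟨hpS', hpS⟩ := mem_sdiff.mp hp
  obtain ⟨j, -, hpj⟩ := mem_biUnion.mp (hS'P hpS')
  obtain ⟨q, hq⟩ := card_eq_one.mp (hS j)
  obtain ⟨hqS, hqj⟩ := mem_inter.mp (hq ▸ mem_singleton_self q)
  have hqS' : q ∉ S' := fun h => by
    have : q = p := card_le_one.mp (hS' j).le q (mem_inter.mpr ⟨h, hqj⟩) p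
      (mem_inter.mpr ⟨hpS', hpj⟩)
    exact hpS (this ▸ hqS)
  -- exchange `q` for `p` inside `T = S ∪ {p}`
  set T := insert p S with hT
  have hTp : T.erase p = S := erase_insert hpS
  have hTpt : IsTransversal P (T.erase p) := by rwa [hTp]
  have hTqt : IsTransversal P (T.erase q) := by
    have hq : q ∈ T ∩ P j := mem_inter.mpr ⟨mem_insert_of_mem hqS, hqj⟩
    rw [← filter_isTransversal_erase hP (mem_insert_self p S) hpj hTpt, mem_filter] at hq
    exact hq.2
  have hTP : T ⊆ univ.biUnion P := insert_subset (hS'P hpS') hSP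
  have hlt : #(S' \ T.erase q) < d := by
    have : S' \ T.erase q = (S' \ S).erase p := by
      ext x
      simp only [hT, mem_sdiff, mem_erase, mem_insert]
      grind
    rw [this, ← hd]
    exact card_erase_lt_of_mem hp
  rw [← hTp, hf T hTP p (mem_insert_self p S) q (mem_insert_of_mem hqS) hTpt hTqt]
  exact ih _ hlt hTqt ((erase_subset q T).trans hTP) rfl

end IsTransversal

end Transversal

section HemiMetric

variable {m n : ℕ} {P : Fin (m + 1) → Finset ℕ}

theorem alphaPartition_eq_ite (S : Finset ℕ) :
    alphaPartition m P S = if IsTransversal P S then 1 else 0 := by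
  unfold alphaPartition IsTransversal
  congr

theorem sigmaT_alphaPartition (T : Finset ℕ) :
    sigmaT (alphaPartition m P) T = #(T.filter fun k => IsTransversal P (T.erase k)) := by
  simp only [sigmaT, alphaPartition_eq_ite, sum_boole]

theorem inHMET_alphaPartition (hP : Pairwise (Disjoint on P))
    (hcover : univ.biUnion P = V n) : inHMET m n (alphaPartition m P) := by
  refine ⟨fun S _ _ => ?_, fun T hT _ i hi => ?_⟩
  · rw [alphaPartition_eq_ite]
    split_ifs <;> norm_num
  · rw [sigmaT_alphaPartition, alphaPartition_eq_ite]
    split_ifs with h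
    · obtain ⟨j, -, hij⟩ := mem_biUnion.mp (hcover ▸ hT hi)
      rw [h.filter_isTransversal_erase hP hi hij, h.card_inter_eq_two hi hij]
      norm_num
    · simp

theorem inHMET.apply_erase_eq_of_sigmaT_eq {x : Finset ℕ → ℝ} (hx : inHMET m n x)
    {T : Finset ℕ} (hT : T ⊆ V n) (hTc : #T = m + 2) {a b : ℕ} (ha : a ∈ T) (hb : b ∈ T)
    (hsigma : sigmaT x T = x (T.erase a) + x (T.erase b)) :
    x (T.erase a) = x (T.erase b) := by
  have hA := hx.2 T hT hTc a ha
  have hB := hx.2 T hT hTc b hb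
  linarith

theorem inHMET.apply_erase_eq_of_isTransversal (hP : Pairwise (Disjoint on P))
    (hcover : univ.biUnion P = V n) {x : Finset ℕ → ℝ} (hx : inHMET m n x)
    (hzero : ∀ S ⊆ V n, #S = m + 1 → ¬ IsTransversal P S → x S = 0)
    {T : Finset ℕ} (hT : T ⊆ V n) {a b : ℕ} (ha : a ∈ T) (hb : b ∈ T)
    (hta : IsTransversal P (T.erase a)) (htb : IsTransversal P (T.erase b)) :
    x (T.erase a) = x (T.erase b) := by
  obtain rfl | hab := eq_or_ne a b
  · rfl
  obtain ⟨j, -, haj⟩ := mem_biUnion.mp (hcover ▸ hT ha)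
  have hfilter := hta.filter_isTransversal_erase hP ha haj
  have hbj : b ∈ P j := (mem_inter.mp (hfilter ▸ mem_filter.mpr ⟨hb, htb⟩)).2
  have hTj : T ∩ P j = {a, b} := by
    refine (eq_of_subset_of_card_le ?_ ?_).symm
    · exact insert_subset (mem_inter.mpr ⟨ha, haj⟩)
        (singleton_subset_iff.mpr (mem_inter.mpr ⟨hb, hbj⟩))
    · rw [hta.card_inter_eq_two ha haj, card_pair hab]
  have hTcard : #T = m + 2 := by
    have := hta.card_eq hP (hcover ▸ (erase_subset a T).trans hT)
    rw [← card_erase_add_one ha, this, Fintype.card_fin]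
  refine hx.apply_erase_eq_of_sigmaT_eq hT hTcard ha hb ?_
  rw [sigmaT, ← sum_pair (f := fun k => x (T.erase k)) hab]
  refine (sum_subset (insert_subset ha (singleton_subset_iff.mpr hb)) fun k hkT hk => ?_).symm
  refine hzero _ ((erase_subset k T).trans hT) (by rw [card_erase_of_mem hkT, hTcard]; rfl)
    fun htk => ?_
  exact hk (hTj ▸ hfilter ▸ mem_filter.mpr ⟨hkT, htk⟩)

theorem exists_eq_mul_alphaPartition (hP : Pairwise (Disjoint on P))
    (hne : ∀ j, (P j).Nonempty) (hcover : univ.biUnion P = V n) {x y : Finset ℕ → ℝ}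
    (hx : inHMET m n x) (hy : inHMET m n y)
    (hsum : ∀ S, S ⊆ V n ∧ #S = m + 1 → alphaPartition m P S = x S + y S) :
    ∃ c : ℝ, 0 ≤ c ∧
      ∀ S, S ⊆ V n ∧ #S = m + 1 → x S = c * alphaPartition m P S := by
  have hzero : ∀ S ⊆ V n, #S = m + 1 → ¬ IsTransversal P S → x S = 0 := by
    intro S hSV hSc hS
    have h := hsum S ⟨hSV, hSc⟩
    rw [alphaPartition_eq_ite, if_neg hS] at h
    linarith [hx.1 S hSV hSc, hy.1 S hSV hSc]
  obtain ⟨S₀, hS₀P, hS₀⟩ := exists_isTransversal hP hne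
  have hS₀c : #S₀ = m + 1 := by rw [hS₀.card_eq hP hS₀P, Fintype.card_fin]
  refine ⟨x S₀, hx.1 S₀ (hcover ▸ hS₀P) hS₀c, fun S ⟨hSV, hSc⟩ => ?_⟩
  rw [alphaPartition_eq_ite]
  split_ifs with hS
  · rw [mul_one]
    refine hS.apply_eq_of_exchange hP (fun T hT a ha b hb => ?_) hS₀ (hcover ▸ hSV) hS₀P
    exact hx.apply_erase_eq_of_isTransversal hP hcover hzero (hcover ▸ hT) ha hb
  · rw [mul_zero]
    exact hzero S hSV hSc hS

end HemiMetric

theorem alphaPartition_extreme_general (m n : ℕ)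
    (P : Fin (m + 1) → Finset ℕ)
    (hne : ∀ j, (P j).Nonempty)
    (hdisj : ∀ j k, j ≠ k → Disjoint (P j) (P k))
    (hcover : Finset.univ.biUnion P = V n) :
    IsExtremeRayOn (inHMET m n) (fun S => S ⊆ V n ∧ S.card = m + 1)
      (alphaPartition m P) := by
  have hP : Pairwise (Disjoint on P) := fun j k hjk => hdisj j k hjk
  refine ⟨inHMET_alphaPartition hP hcover, ?_, fun x y hx hy hsum => ?_⟩
  · obtain ⟨S, hSP, hS⟩ := exists_isTransversal hP hne
    refine ⟨S, ⟨hcover ▸ hSP, by rw [hS.card_eq hP hSP, Fintype.card_fin]⟩, ?_⟩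
    rw [alphaPartition_eq_ite, if_pos hS]
    exact one_ne_zero
  · refine ⟨exists_eq_mul_alphaPartition hP hne hcover hx hy hsum,
      exists_eq_mul_alphaPartition hP hne hcover hy hx fun S hS => ?_⟩
    rw [hsum S hS, add_comm]

/-- The `m`-partition hemi-metrics lie on extreme rays of the cone `HMET m n`. -/
theorem alphaPartition_extreme (m n : ℕ) (hm : 1 ≤ m) (hn : m + 1 ≤ n)
    (P : Fin (m + 1) → Finset ℕ)
    (hne : ∀ j, (P j).Nonempty)
    (hdisj : ∀ j k, j ≠ k → Disjoint (P j) (P k))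
    (hcover : Finset.univ.biUnion P = V n) :
    IsExtremeRayOn (inHMET m n) (fun S => S ⊆ V n ∧ S.card = m + 1)
      (alphaPartition m P) :=
  alphaPartition_extreme_general m n P hne hdisj hcover
end

section
/- Let m ≥ 1 and n ≥ m+2 be integers, and define v on the (m+1)-element subsets S of V_n by v(S) = 1 if 1 ∈ S and v(S) = 0 if 1 ∉ S. Then v lies on an extreme ray of the cone SMET^{m,m}_n. -/
/-- The vector equal to `1` on `(m+1)`-subsets containing the vertex `1` and `0`
elsewhere. -/
def oneVertexRay (S : Finset ℕ) : ℝ := if 1 ∈ S then 1 else 0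

/-!
`oneVertexRay` meets every simplex inequality `(T, i)` with `1 ∈ T`, `i ≠ 1` with equality,
since `Σ_T = m + 1 = s + 1` there. If `oneVertexRay = x + y` inside the cone, nonnegativity
forces `x = 0` off the sets containing `1`, and equality passes to `x` and `y`. Comparing the
tight inequalities for `i = a` and `i = b` in `T = S ∪ {b}` gives `x S = x (S - a + b)`, and such
exchanges connect all `(m+1)`-sets containing `1`, so `x` is constant on them.
-/

open Finset

namespace Finset

variable {α β : Type*} [DecidableEq α]

/-- Connectivity of the Johnson graph. -/
theorem eq_of_forall_exchange {A U : Finset α} {k : ℕ} {f : Finset α → β}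
    (hf : ∀ S, A ⊆ S → S ⊆ U → #S = k → ∀ a ∈ S, a ∉ A → ∀ b ∈ U, b ∉ S →
      f (insert b (S.erase a)) = f S)
    {S S' : Finset α} (hS : A ⊆ S ∧ S ⊆ U ∧ #S = k) (hS' : A ⊆ S' ∧ S' ⊆ U ∧ #S' = k) :
    f S = f S' := by
  induction hd : #(S' \ S) generalizing S with
  | zero =>
    have hsub : S' ⊆ S := sdiff_eq_empty_iff_subset.mp (card_eq_zero.mp hd)
    rw [eq_of_subset_of_card_le hsub (by omega)]
  | succ d ih =>
    obtain ⟨b, hb⟩ : (S' \ S).Nonempty := card_pos.mp (by omega)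
    obtain ⟨a, ha⟩ : (S \ S').Nonempty :=
      card_pos.mp (by rw [card_sdiff_comm (by omega)]; omega)
    have hab : (S' \ S).erase b = S' \ insert b (S.erase a) := by
      ext z
      simp only [mem_erase, mem_sdiff, mem_insert] at ha hb ⊢
      grind
    rw [mem_sdiff] at ha hb
    have haA : a ∉ A := fun h => ha.2 (hS'.1 h)
    have hbS : b ∉ S.erase a := fun h => hb.2 (mem_of_mem_erase h)
    rw [← hf S hS.1 hS.2.1 hS.2.2 a ha.1 haA b (hS'.2.1 hb.1) hb.2]
    refine ih ⟨fun z hz => mem_insert_of_mem (mem_erase.mpr ⟨?_, hS.1 hz⟩), ?_, ?_⟩ ?_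
    · rintro rfl; exact haA hz
    · exact insert_subset (hS'.2.1 hb.1) ((erase_subset _ _).trans hS.2.1)
    · rw [card_insert_of_notMem hbS, card_erase_add_one ha.1, hS.2.2]
    · rw [← hab, card_erase_of_mem (mem_sdiff.mpr hb)]; omega

end Finset

theorem card_V (k : ℕ) : #(V k) = k := by simp [V]

theorem V_subset_V {k n : ℕ} (h : k ≤ n) : V k ⊆ V n := Icc_subset_Icc le_rfl h

theorem one_mem_V {k : ℕ} (h : 1 ≤ k) : 1 ∈ V k := mem_Icc.mpr ⟨le_rfl, h⟩

theorem oneVertexRay_erase_of_ne {T : Finset ℕ} {i : ℕ} (h1 : 1 ∈ T) (hi : i ≠ 1) :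
    oneVertexRay (T.erase i) = 1 :=
  if_pos (mem_erase.mpr ⟨hi.symm, h1⟩)

theorem sigmaT_oneVertexRay_of_one_mem {T : Finset ℕ} (h1 : 1 ∈ T) :
    sigmaT oneVertexRay T = (#T - 1 : ℕ) := by
  rw [sigmaT, ← add_sum_erase _ _ h1, oneVertexRay, if_neg (notMem_erase 1 T), zero_add,
    sum_congr rfl fun k hk => oneVertexRay_erase_of_ne h1 (ne_of_mem_erase hk)]
  simp [card_erase_of_mem h1]

theorem sigmaT_oneVertexRay_of_one_notMem {T : Finset ℕ} (h1 : 1 ∉ T) :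
    sigmaT oneVertexRay T = 0 :=
  sum_eq_zero fun _ _ => if_neg fun h => h1 (mem_of_mem_erase h)

theorem inSMET_oneVertexRay (m n : ℕ) : inSMET m n m oneVertexRay := by
  refine ⟨fun S _ _ => by unfold oneVertexRay; split <;> norm_num, fun T _ hT i hi => ?_⟩
  by_cases h1 : 1 ∈ T
  · rw [sigmaT_oneVertexRay_of_one_mem h1, hT]
    by_cases hi1 : i = 1
    · simp only [oneVertexRay, hi1, notMem_erase, if_false, mul_zero]
      positivity
    · simp [oneVertexRay_erase_of_ne h1 hi1]
  · rw [sigmaT_oneVertexRay_of_one_notMem h1, oneVertexRay,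
      if_neg fun h => h1 (mem_of_mem_erase h), mul_zero]

theorem sigmaT_eq_add {d x y : Finset ℕ → ℝ} {T : Finset ℕ}
    (h : ∀ k ∈ T, d (T.erase k) = x (T.erase k) + y (T.erase k)) :
    sigmaT d T = sigmaT x T + sigmaT y T := by
  rw [sigmaT, sigmaT, sigmaT, ← sum_add_distrib]
  exact sum_congr rfl h

theorem erase_subset_V_and_card {n k : ℕ} {T : Finset ℕ} (hT : T ⊆ V n) (hc : #T = k + 1)
    {i : ℕ} (hi : i ∈ T) : T.erase i ⊆ V n ∧ #(T.erase i) = k :=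
  ⟨(erase_subset i T).trans hT, by rw [card_erase_of_mem hi, hc]; rfl⟩

section Decomposition

variable {m n : ℕ} {x y : Finset ℕ → ℝ}

theorem eq_zero_of_oneVertexRay_eq_add (hx : inSMET m n m x) (hy : inSMET m n m y)
    (hxy : ∀ S, S ⊆ V n ∧ #S = m + 1 → oneVertexRay S = x S + y S)
    {S : Finset ℕ} (hS : S ⊆ V n) (hc : #S = m + 1) (h1 : 1 ∉ S) : x S = 0 := by
  have := hxy S ⟨hS, hc⟩
  rw [oneVertexRay, if_neg h1] at this
  linarith [hx.1 S hS hc, hy.1 S hS hc]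

/-- The simplex inequalities that are tight at `oneVertexRay` are tight at both summands. -/
theorem simplex_eq_of_oneVertexRay_eq_add (hx : inSMET m n m x) (hy : inSMET m n m y)
    (hxy : ∀ S, S ⊆ V n ∧ #S = m + 1 → oneVertexRay S = x S + y S)
    {T : Finset ℕ} (hT : T ⊆ V n) (hc : #T = m + 2) (h1 : 1 ∈ T) {i : ℕ} (hi : i ∈ T)
    (hi1 : i ≠ 1) : ((m : ℝ) + 1) * x (T.erase i) = sigmaT x T := by
  have hsum := sigmaT_eq_add fun k hk => hxy _ (erase_subset_V_and_card hT hc hk)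
  have hval := hxy _ (erase_subset_V_and_card hT hc hi)
  rw [sigmaT_oneVertexRay_of_one_mem h1, hc] at hsum
  rw [oneVertexRay_erase_of_ne h1 hi1] at hval
  refine ((add_eq_add_iff_eq_and_eq (hx.2 T hT hc i hi) (hy.2 T hT hc i hi)).mp ?_).1
  push_cast at hsum
  linear_combination hsum - ((m : ℝ) + 1) * hval

theorem exchange_of_oneVertexRay_eq_add (hx : inSMET m n m x) (hy : inSMET m n m y)
    (hxy : ∀ S, S ⊆ V n ∧ #S = m + 1 → oneVertexRay S = x S + y S)
    {S : Finset ℕ} (hS : S ⊆ V n) (hc : #S = m + 1) (h1 : 1 ∈ S) {a b : ℕ} (ha : a ∈ S)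
    (ha1 : a ≠ 1) (hb : b ∈ V n) (hbS : b ∉ S) : x (insert b (S.erase a)) = x S := by
  have hT : insert b S ⊆ V n := insert_subset hb hS
  have hTc : #(insert b S) = m + 2 := by rw [card_insert_of_notMem hbS, hc]
  have h1T : 1 ∈ insert b S := mem_insert_of_mem h1
  have ea := simplex_eq_of_oneVertexRay_eq_add hx hy hxy hT hTc h1T (mem_insert_of_mem ha) ha1
  have eb := simplex_eq_of_oneVertexRay_eq_add hx hy hxy hT hTc h1T (mem_insert_self b S)
    (by rintro rfl; exact hbS h1)
  rw [erase_insert_of_ne (by rintro rfl; exact hbS ha)] at ea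
  rw [erase_insert hbS] at eb
  exact mul_left_cancel₀ (by positivity) (ea.trans eb.symm)

theorem exists_eq_mul_oneVertexRay_of_eq_add (hn : m + 1 ≤ n) (hx : inSMET m n m x)
    (hy : inSMET m n m y) (hxy : ∀ S, S ⊆ V n ∧ #S = m + 1 → oneVertexRay S = x S + y S) :
    ∃ c : ℝ, 0 ≤ c ∧ ∀ S, S ⊆ V n ∧ #S = m + 1 → x S = c * oneVertexRay S := by
  have hV : V (m + 1) ⊆ V n := V_subset_V hn
  have h1V : 1 ∈ V (m + 1) := one_mem_V (by omega)
  have hconst : ∀ S, S ⊆ V n → #S = m + 1 → 1 ∈ S → x S = x (V (m + 1)) :=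
    fun S hS hc h1 => eq_of_forall_exchange
      (fun _ hA hU hk _ ha haA _ hb hbS => exchange_of_oneVertexRay_eq_add hx hy hxy hU hk
        (singleton_subset_iff.mp hA) ha (by simpa using haA) hb hbS)
      ⟨singleton_subset_iff.mpr h1, hS, hc⟩ ⟨singleton_subset_iff.mpr h1V, hV, card_V _⟩
  refine ⟨x (V (m + 1)), hx.1 _ hV (card_V _), fun S ⟨hS, hc⟩ => ?_⟩
  by_cases h1 : 1 ∈ S
  · rw [hconst S hS hc h1, oneVertexRay, if_pos h1, mul_one]
  · rw [eq_zero_of_oneVertexRay_eq_add hx hy hxy hS hc h1, oneVertexRay, if_neg h1, mul_zero]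

end Decomposition

theorem oneVertexRay_extreme_general (m n : ℕ) (hn : m + 2 ≤ n) :
    IsExtremeRayOn (inSMET m n (m : ℝ)) (fun S => S ⊆ V n ∧ S.card = m + 1)
      oneVertexRay := by
  refine ⟨inSMET_oneVertexRay m n, ⟨V (m + 1), ⟨V_subset_V (by omega), card_V _⟩, ?_⟩,
    fun x y hx hy hxy => ⟨?_, ?_⟩⟩
  · rw [oneVertexRay, if_pos (one_mem_V (by omega))]
    exact one_ne_zero
  · exact exists_eq_mul_oneVertexRay_of_eq_add (by omega) hx hy hxy
  · exact exists_eq_mul_oneVertexRay_of_eq_add (by omega) hy hx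
      fun S hS => (hxy S hS).trans (add_comm _ _)

/-- The vector `oneVertexRay` lies on an extreme ray of the cone `SMET m n m` of
`(m,m)`-super-metrics. -/
theorem oneVertexRay_extreme (m n : ℕ) (hm : 1 ≤ m) (hn : m + 2 ≤ n) :
    IsExtremeRayOn (inSMET m n (m : ℝ)) (fun S => S ⊆ V n ∧ S.card = m + 1)
      oneVertexRay :=
  oneVertexRay_extreme_general m n hn
end
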